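/- arXiv:2604.25566 — 9 statements merged into one kernel-verified Lean document; each statement's English description precedes it below -/
import Mathlib

section
/- Let (a_p)_p be a sequence of integers indexed by primes, and let (b_n)_n be a strictly increasing sequence of positive integers. Suppose that for every n, there exist infinitely many primes p such that a_p ≡ b_n (mod p). Then for every nonzero polynomial f with integer coefficients, there exist infinitely many primes p with p ∤ f(a_p). -/
/-!
Since `b` is injective and `f` has finitely many roots, `f (b n) ≠ 0` for some `n`. Infinitely
many primes satisfy `a_p ≡ b_n (mod p)`, and only finitely many of them divide `f (b n)`; for
every other one, `f (a_p) ≡ f (b n) ≢ 0 (mod p)`.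
-/

open Polynomial

theorem Polynomial.exists_eval_ne_zero_of_injective {R α : Type*} [CommRing R] [IsDomain R]
    [Infinite α] {f : R[X]} (hf : f ≠ 0) {b : α → R} (hb : b.Injective) :
    ∃ n, f.eval (b n) ≠ 0 := by
  by_contra! hroot
  exact Set.infinite_of_injective_forall_mem hb hroot (finite_setOfPred_isRoot hf)

theorem Int.ModEq.polynomial_eval {m x y : ℤ} (h : x ≡ y [ZMOD m]) (f : ℤ[X]) :
    f.eval x ≡ f.eval y [ZMOD m] :=
  Int.modEq_iff_dvd.2 (Int.modEq_iff_dvd.1 h |>.trans (sub_dvd_eval_sub y x f))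

theorem Nat.Primes.finite_setOf_dvd {c : ℤ} (hc : c ≠ 0) :
    {p : Nat.Primes | ((p : ℕ) : ℤ) ∣ c}.Finite := by
  refine (c.natAbs.primeFactors.finite_toSet.preimage
    Nat.Primes.coe_nat_injective.injOn).subset fun p hp => ?_
  exact p.prop.mem_primeFactors (Int.natCast_dvd.1 hp) (Int.natAbs_ne_zero.2 hc)

theorem statement2_general (a : Nat.Primes → ℤ) (b : ℕ → ℤ)
    (hmono : StrictMono b)
    (h : ∀ n, {p : Nat.Primes | a p ≡ b n [ZMOD (p : ℕ)]}.Infinite)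
    (f : Polynomial ℤ) (hf : f ≠ 0) :
    {p : Nat.Primes | ¬ ((p : ℕ) : ℤ) ∣ f.eval (a p)}.Infinite := by
  obtain ⟨n, hn⟩ := Polynomial.exists_eval_ne_zero_of_injective hf hmono.injective
  refine ((h n).sdiff (Nat.Primes.finite_setOf_dvd hn)).mono ?_
  rintro p ⟨hcong, hndvd⟩ hdvd
  exact hndvd <| Int.modEq_zero_iff_dvd.1 <|
    (hcong.polynomial_eval f).symm.trans (Int.modEq_zero_iff_dvd.2 hdvd)

/-- Anzawa–Funakura's criterion: if `(b_n)` is a strictly increasing sequence of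
positive integers and for every `n` there are infinitely many primes `p` with
`a_p ≡ b_n (mod p)`, then for every nonzero integer polynomial `f` there are
infinitely many primes `p` with `p ∤ f(a_p)`. -/
theorem statement2 (a : Nat.Primes → ℤ) (b : ℕ → ℤ)
    (hmono : StrictMono b) (hpos : ∀ n, 0 < b n)
    (h : ∀ n, {p : Nat.Primes | a p ≡ b n [ZMOD (p : ℕ)]}.Infinite)
    (f : Polynomial ℤ) (hf : f ≠ 0) :
    {p : Nat.Primes | ¬ ((p : ℕ) : ℤ) ∣ f.eval (a p)}.Infinite :=
  statement2_general a b hmono h f hf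
end

section
/- The element (⌊log p⌋ mod p)_p of A is naively transcendental: for every nonzero polynomial f with integer coefficients, there exist infinitely many primes p such that p does not divide f(⌊log p⌋). -/
/-!
For every large `n`, Bertrand's postulate gives a prime `p` with `eⁿ < p < eⁿ⁺¹`, so
`⌊log p⌋ = n`. Since a polynomial grows more slowly than `exp`, eventually `0 < |f(n)| < eⁿ < p`,
and then `p` cannot divide `f(n) = f(⌊log p⌋)`.
-/

open Filter Polynomial Real

lemma exists_prime_exp_lt_floor_log_eq {n : ℕ} (hn : 2 ≤ n) :
    ∃ p : ℕ, p.Prime ∧ exp n < p ∧ ⌊log p⌋ = n := by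
  obtain ⟨p, hp, hmp, hp2m⟩ := Nat.exists_prime_lt_and_le_two_mul ⌈exp n⌉₊ (by positivity)
  have hlow : exp n < p := (Nat.le_ceil _).trans_lt (by exact_mod_cast hmp)
  have hp0 : (0 : ℝ) < p := (exp_pos _).trans hlow
  have hhigh : (p : ℝ) < exp (n + 1) := by
    have hceil : (⌈exp n⌉₊ : ℝ) < exp n + 1 := Nat.ceil_lt_add_one (exp_pos _).le
    have hn' : (2 : ℝ) ≤ n := by exact_mod_cast hn
    have hexp3 : (3 : ℝ) ≤ exp n := by linarith [add_one_le_exp (n : ℝ)]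
    -- `2 (eⁿ + 1) < e · eⁿ` because `eⁿ ≥ 3 > 2 / (e - 2)`
    calc (p : ℝ) ≤ 2 * ⌈exp n⌉₊ := by exact_mod_cast hp2m
      _ < 2 * (exp n + 1) := by linarith
      _ < exp n * exp 1 := by nlinarith [exp_one_gt_d9]
      _ = exp (n + 1) := (exp_add _ _).symm
  refine ⟨p, hp, hlow, Int.floor_eq_iff.2 ⟨?_, ?_⟩⟩
  · exact_mod_cast (le_log_iff_exp_le hp0).2 hlow.le
  · exact_mod_cast (log_lt_iff_lt_exp hp0).2 hhigh

lemma eventually_abs_eval_lt_exp (P : ℝ[X]) : ∀ᶠ x in atTop, |P.eval x| < exp x := by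
  filter_upwards [P.tendsto_div_exp_atTop.abs.eventually_lt_const (by norm_num : |(0 : ℝ)| < 1)]
    with x hx
  rwa [abs_div, abs_of_pos (exp_pos x), div_lt_one (exp_pos x)] at hx

lemma eventually_eval_natCast_ne_zero {R : Type*} [CommRing R] [IsDomain R] [CharZero R]
    {f : R[X]} (hf : f ≠ 0) : ∀ᶠ n : ℕ in atTop, f.eval (n : R) ≠ 0 := by
  rw [← Nat.cofinite_eq_atTop]
  exact ((finite_setOfPred_isRoot hf).preimage Nat.cast_injective.injOn).eventually_cofinite_notMem

/-- `(⌊log p⌋ mod p)_p` is naively transcendental: for every nonzero integer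
polynomial `f` there are infinitely many primes `p` with `p ∤ f(⌊log p⌋)`. -/
theorem statement3 (f : Polynomial ℤ) (hf : f ≠ 0) :
    {p : ℕ | p.Prime ∧ ¬ (p : ℤ) ∣ f.eval ⌊Real.log p⌋}.Infinite := by
  refine Set.infinite_of_forall_exists_gt fun N => ?_
  have hsmall : ∀ᶠ n : ℕ in atTop, |((f.eval (n : ℤ) : ℤ) : ℝ)| < exp n := by
    filter_upwards [tendsto_natCast_atTop_atTop.eventually
      (eventually_abs_eval_lt_exp (f.map (Int.castRingHom ℝ)))] with n hn
    simpa [eval_map_apply] using hn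
  obtain ⟨n, ⟨⟨hfn, hne⟩, hNn⟩, hn2⟩ := (((hsmall.and (eventually_eval_natCast_ne_zero hf)).and
    (eventually_ge_atTop N)).and (eventually_ge_atTop 2)).exists
  obtain ⟨p, hp, hexp, hfloor⟩ := exists_prime_exp_lt_floor_log_eq hn2
  refine ⟨p, ⟨hp, fun hdvd => hne (Int.eq_zero_of_abs_lt_dvd (hfloor ▸ hdvd) ?_)⟩, ?_⟩
  · exact_mod_cast hfn.trans hexp
  · have hNn' : (N : ℝ) ≤ n := by exact_mod_cast hNn
    have : (N : ℝ) < p := by linarith [add_one_le_exp (n : ℝ)]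
    exact_mod_cast this
end

section
/- Let S be an infinite set of primes and (b_p)_{p∈S} a sequence of integers with b_p → ∞ and b_p = O(p^ε) for some 0 < ε < 1. Assume there exists ε' with ε < ε' < 1 such that #{p ≤ X : p ∈ S} ≫ X^{ε'} for all sufficiently large X. Then for every nonzero polynomial f with integer coefficients, there exist infinitely many p ∈ S with p ∤ f(b_p). -/
/-!
Suppose only finitely many `p ∈ S` fail to divide `f(b_p)`. Discarding them, and the finitely many
`p` for which `b_p` does not exceed every root of `f`, each remaining `p ∈ S` with `p ≤ X` divides
the nonzero integer `f(b_p)`, where `1 ≤ b_p ≤ C X^ε`. Grouping these primes by the value `v` of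
`b_p`, each group consists of prime factors of `f(v) ≠ 0`, so it has at most
`log₂ |f(v)| = O(log X)` elements. Hence there are `O(X^ε log X)` such primes, which contradicts
`#{p ∈ S : p ≤ X} ≫ X^{ε'}` since `ε < ε'`.
-/

open Filter Asymptotics

instance : LinearOrder Nat.Primes := inferInstanceAs (LinearOrder {p : ℕ // p.Prime})

open scoped Polynomial
open Finset

theorem Nat.card_primeFactors_le_log (n : ℕ) : #n.primeFactors ≤ Nat.log 2 n := by
  rcases eq_or_ne n 0 with rfl | hn
  · simp
  refine (Nat.le_log_iff_pow_le one_lt_two hn).2 ?_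
  calc 2 ^ #n.primeFactors ≤ ∏ p ∈ n.primeFactors, p :=
        Finset.pow_card_le_prod _ _ _ fun p hp => (Nat.prime_of_mem_primeFactors hp).two_le
    _ ≤ n := Nat.le_of_dvd (Nat.pos_of_ne_zero hn) (Nat.prod_primeFactors_dvd n)

theorem Polynomial.exists_natAbs_eval_le (f : ℤ[X]) : ∃ A : ℕ, 0 < A ∧
    ∀ (Y : ℕ) (v : ℤ), 1 ≤ Y → v.natAbs ≤ Y → (f.eval v).natAbs ≤ A * Y ^ f.natDegree := by
  refine ⟨∑ i ∈ range (f.natDegree + 1), (f.coeff i).natAbs + 1, Nat.succ_pos _,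
    fun Y v hY hv => ?_⟩
  rw [eval_eq_sum_range]
  calc (∑ i ∈ range (f.natDegree + 1), f.coeff i * v ^ i).natAbs
      ≤ ∑ i ∈ range (f.natDegree + 1), (f.coeff i * v ^ i).natAbs := Int.natAbs_sum_le _ _
    _ ≤ ∑ i ∈ range (f.natDegree + 1), (f.coeff i).natAbs * Y ^ f.natDegree := by
        refine Finset.sum_le_sum fun i hi => ?_
        rw [Int.natAbs_mul, Int.natAbs_pow]
        exact Nat.mul_le_mul_left _ <| (Nat.pow_le_pow_left hv i).trans <|
          Nat.pow_le_pow_right hY (Nat.lt_succ_iff.1 (mem_range.1 hi))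
    _ ≤ _ := by rw [← Finset.sum_mul]; gcongr; omega

theorem natCast_mul_natLog_le_mul_logb {n A d : ℕ} {t : ℝ} (hA : 0 < A) (hn : (n : ℝ) ≤ t)
    (ht : 1 ≤ t) : ((n * Nat.log 2 (A * n ^ d) : ℕ) : ℝ) ≤ t * Real.logb 2 (A * t ^ d) := by
  have hAt : 1 ≤ (A : ℝ) * t ^ d :=
    one_le_mul_of_one_le_of_one_le (by exact_mod_cast hA) (one_le_pow₀ ht)
  have hlogb := Real.logb_nonneg one_lt_two hAt
  rcases Nat.eq_zero_or_pos n with rfl | hn0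
  · simpa using mul_nonneg (by linarith) hlogb
  have hlog : (Nat.log 2 (A * n ^ d) : ℝ) ≤ Real.logb 2 (A * t ^ d) :=
    calc _ ≤ Real.logb 2 ((A * n ^ d : ℕ) : ℝ) := Real.natLog_le_logb _ _
      _ ≤ _ := Real.logb_le_logb_of_le one_lt_two (by positivity) (by push_cast; gcongr)
  push_cast
  exact mul_le_mul hn hlog (Nat.cast_nonneg _) (by linarith)

namespace Nat.Primes

theorem card_le_log_natAbs_of_forall_dvd {s : Finset Nat.Primes} {n : ℤ} (hn : n ≠ 0)
    (h : ∀ p ∈ s, ((p : ℕ) : ℤ) ∣ n) : #s ≤ Nat.log 2 n.natAbs := by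
  refine le_trans ?_ (Nat.card_primeFactors_le_log _)
  refine Finset.card_le_card_of_injOn (↑) (fun p hp => ?_) coe_nat_injective.injOn
  exact Nat.mem_primeFactors.2 ⟨p.2, Int.natCast_dvd.1 (h p hp), Int.natAbs_ne_zero.2 hn⟩

theorem card_le_card_mul_log_of_dvd {α : Type*} [DecidableEq α] {P : Finset Nat.Primes}
    {V : Finset α} {b : Nat.Primes → α} {g : α → ℤ} {N : ℕ} (hb : ∀ p ∈ P, b p ∈ V)
    (hdvd : ∀ p ∈ P, ((p : ℕ) : ℤ) ∣ g (b p)) (hne : ∀ p ∈ P, g (b p) ≠ 0)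
    (hN : ∀ v ∈ V, (g v).natAbs ≤ N) : #P ≤ #V * Nat.log 2 N := by
  have hfibre : ∀ v ∈ V, #{p ∈ P | b p = v} ≤ Nat.log 2 N := by
    intro v hv
    obtain hempty | ⟨p₀, hp₀⟩ := {p ∈ P | b p = v}.eq_empty_or_nonempty
    · simp [hempty]
    have hp₀ := Finset.mem_filter.1 hp₀
    refine (card_le_log_natAbs_of_forall_dvd (hp₀.2 ▸ hne p₀ hp₀.1) fun p hp => ?_).trans
      (Nat.log_mono_right (hN v hv))
    obtain ⟨hpP, rfl⟩ := Finset.mem_filter.1 hp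
    exact hdvd p hpP
  calc #P = ∑ v ∈ V, #{p ∈ P | b p = v} := Finset.card_eq_sum_card_fiberwise hb
    _ ≤ ∑ _v ∈ V, Nat.log 2 N := Finset.sum_le_sum hfibre
    _ = #V * Nat.log 2 N := by rw [Finset.sum_const, smul_eq_mul]

theorem finite_setOf_le (X : ℝ) : {p : Nat.Primes | (p : ℝ) ≤ X}.Finite :=
  ((Set.finite_Iic ⌊X⌋₊).preimage coe_nat_injective.injOn).subset fun _ hp => Nat.le_floor hp

theorem finite_setOf_not_of_eventually {S : Set Nat.Primes} {P : Nat.Primes → Prop}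
    (h : ∀ᶠ p in atTop ⊓ 𝓟 S, P p) : {p ∈ S | ¬ P p}.Finite := by
  obtain ⟨q, hq⟩ := eventually_atTop.1 (eventually_inf_principal.1 h)
  refine ((Set.finite_Iio (q : ℕ)).preimage coe_nat_injective.injOn).subset ?_
  rintro p ⟨hpS, hp⟩
  exact lt_of_not_ge fun hqp => hp (hq p hqp hpS)

theorem ncard_le_ncard_add_mul_logb {S E : Set Nat.Primes} (hE : E.Finite)
    {b : Nat.Primes → ℤ} {f : ℤ[X]} {A : ℕ} (hA : 0 < A)
    (hfA : ∀ (Y : ℕ) (v : ℤ), 1 ≤ Y → v.natAbs ≤ Y → (f.eval v).natAbs ≤ A * Y ^ f.natDegree)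
    (hgood : ∀ p ∈ S \ E, 0 < b p ∧ ((p : ℕ) : ℤ) ∣ f.eval (b p) ∧ f.eval (b p) ≠ 0)
    {X t : ℝ} (ht : 1 ≤ t) (hbt : ∀ p ∈ S, (p : ℝ) ≤ X → (b p : ℝ) ≤ t) :
    ({p ∈ S | (p : ℝ) ≤ X}.ncard : ℝ) ≤ E.ncard + t * Real.logb 2 (A * t ^ f.natDegree) := by
  classical
  set Y := ⌊t⌋₊
  have hY : 1 ≤ Y := Nat.le_floor (by exact_mod_cast ht)
  have hP : {p ∈ S \ E | (p : ℝ) ≤ X}.Finite := (finite_setOf_le X).subset fun _ hp => hp.2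
  have hgood' : ∀ p ∈ hP.toFinset, 0 < b p ∧ ((p : ℕ) : ℤ) ∣ f.eval (b p) ∧ f.eval (b p) ≠ 0 :=
    fun p hp => hgood p ((Set.Finite.mem_toFinset _).1 hp).1
  have hcard : #hP.toFinset ≤ Y * Nat.log 2 (A * Y ^ f.natDegree) := by
    have hb : ∀ p ∈ hP.toFinset, b p ∈ Finset.Icc 1 (Y : ℤ) := by
      intro p hp
      obtain ⟨⟨hpS, -⟩, hpX⟩ := (Set.Finite.mem_toFinset _).1 hp
      refine Finset.mem_Icc.2 ⟨(hgood' p hp).1, ?_⟩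
      rw [Int.natCast_floor_eq_floor (by linarith)]
      exact Int.le_floor.2 (hbt p hpS hpX)
    have hN : ∀ v ∈ Finset.Icc 1 (Y : ℤ), (f.eval v).natAbs ≤ A * Y ^ f.natDegree := by
      intro v hv
      obtain ⟨hv1, hvY⟩ := Finset.mem_Icc.1 hv
      exact hfA Y v hY (by omega)
    have := card_le_card_mul_log_of_dvd hb (fun p hp => (hgood' p hp).2.1)
      (fun p hp => (hgood' p hp).2.2) hN
    rwa [Int.card_Icc, add_sub_cancel_right, Int.toNat_natCast] at this
  have hsplit : {p ∈ S | (p : ℝ) ≤ X}.ncard ≤ E.ncard + #hP.toFinset := by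
    rw [← Set.ncard_eq_toFinset_card _ hP]
    refine (Set.ncard_le_ncard ?_ (hE.union hP)).trans (Set.ncard_union_le _ _)
    rintro p ⟨hpS, hpX⟩
    exact (em (p ∈ E)).imp id fun hpE => ⟨⟨hpS, hpE⟩, hpX⟩
  calc ({p ∈ S | (p : ℝ) ≤ X}.ncard : ℝ)
      ≤ E.ncard + ((Y * Nat.log 2 (A * Y ^ f.natDegree) : ℕ) : ℝ) := by
        exact_mod_cast hsplit.trans (Nat.add_le_add_left hcard _)
    _ ≤ _ := by
        gcongr
        exact natCast_mul_natLog_le_mul_logb hA (Nat.floor_le (by linarith)) ht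

end Nat.Primes

theorem isLittleO_rpow_mul_log {ε ε' : ℝ} (h : ε < ε') :
    (fun X : ℝ => X ^ ε * Real.log X) =o[atTop] (· ^ ε') := by
  refine ((isBigO_refl (· ^ ε) atTop).mul_isLittleO
    (isLittleO_log_rpow_atTop (sub_pos.2 h))).congr' .rfl ?_
  filter_upwards [eventually_gt_atTop 0] with X hX
  rw [← Real.rpow_add hX, add_sub_cancel]

theorem isLittleO_const_add_mul_logb {ε ε' K C A : ℝ} (d : ℕ) (h : ε < ε') (hε' : 0 < ε')
    (hC : 0 < C) (hA : 0 < A) :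
    (fun X : ℝ => K + C * X ^ ε * Real.logb 2 (A * (C * X ^ ε) ^ d)) =o[atTop] (· ^ ε') := by
  have hlogb : (fun X : ℝ => Real.logb 2 (A * (C * X ^ ε) ^ d)) =O[atTop] Real.log := by
    have heq : (fun X : ℝ => (Real.logb 2 A + d * Real.logb 2 C) + d * ε / Real.log 2 * Real.log X)
        =ᶠ[atTop] fun X => Real.logb 2 (A * (C * X ^ ε) ^ d) := by
      filter_upwards [eventually_gt_atTop 0] with X hX
      rw [Real.logb_mul hA.ne' (by positivity), Real.logb_pow, Real.logb_mul hC.ne' (by positivity),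
        Real.logb_rpow_eq_mul_logb_of_pos hX]
      simp only [Real.logb]
      ring
    exact (Real.isLittleO_const_log_atTop.isBigO.add
      ((isBigO_refl _ _).const_mul_left _)).congr' heq .rfl
  have hmain : (fun X : ℝ => C * X ^ ε * Real.logb 2 (A * (C * X ^ ε) ^ d)) =o[atTop] (· ^ ε') :=
    (((isBigO_refl (· ^ ε) atTop).const_mul_left C).mul hlogb).trans_isLittleO
      (isLittleO_rpow_mul_log h)
  have hconst : (fun _ : ℝ => K) =o[atTop] (· ^ ε') :=
    isLittleO_const_left.2 (.inr (tendsto_norm_atTop_atTop.comp (tendsto_rpow_atTop hε')))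
  exact hconst.add hmain

theorem Asymptotics.IsLittleO.not_eventually_const_mul_le {α : Type*} {l : Filter α} [l.NeBot]
    {g h : α → ℝ} (hgh : g =o[l] h) {c : ℝ} (hc : 0 < c) (hpos : ∀ᶠ x in l, 0 < h x) :
    ¬ ∀ᶠ x in l, c * h x ≤ g x := by
  intro hle
  obtain ⟨x, hx, hxpos, hxle⟩ := ((hgh.def (half_pos hc)).and (hpos.and hle)).exists
  rw [Real.norm_of_nonneg hxpos.le, Real.norm_eq_abs] at hx
  linarith [le_abs_self (g x), mul_pos hc hxpos]

theorem statement4_general (S : Set Nat.Primes) (b : Nat.Primes → ℤ)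
    (ε : ℝ) (hε0 : 0 < ε)
    (htend : Tendsto b (atTop ⊓ 𝓟 S) atTop)
    (hO : ∃ C : ℝ, ∀ p ∈ S, |(b p : ℝ)| ≤ C * (p : ℝ) ^ ε)
    (hcount : ∃ ε' : ℝ, ε < ε' ∧ ε' < 1 ∧ ∃ c : ℝ, 0 < c ∧
      ∀ᶠ X : ℝ in atTop, c * X ^ ε' ≤ (({p ∈ S | (p : ℝ) ≤ X}).ncard : ℝ))
    (f : Polynomial ℤ) (hf : f ≠ 0) :
    {p ∈ S | ¬ ((p : ℕ) : ℤ) ∣ f.eval (b p)}.Infinite := by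
  obtain ⟨C, hC⟩ := hO
  obtain ⟨ε', hεε', -, c, hc, hcount⟩ := hcount
  obtain ⟨A, hA, hfA⟩ := f.exists_natAbs_eval_le
  obtain ⟨B, hB⟩ := (Polynomial.finite_setOfPred_isRoot hf).bddAbove
  by_contra hfin
  set E := {p ∈ S | ¬ ((p : ℕ) : ℤ) ∣ f.eval (b p)} ∪ {p ∈ S | ¬ max B 0 < b p}
  have hE : E.Finite := (Set.not_infinite.1 hfin).union
    (Nat.Primes.finite_setOf_not_of_eventually (htend.eventually_gt_atTop _))
  have hgood : ∀ p ∈ S \ E, 0 < b p ∧ ((p : ℕ) : ℤ) ∣ f.eval (b p) ∧ f.eval (b p) ≠ 0 := by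
    rintro p ⟨hpS, hpE⟩
    simp only [E, Set.mem_union, Set.mem_ofPred_eq, hpS, true_and, not_or, not_not] at hpE
    exact ⟨(le_max_right _ _).trans_lt hpE.2, hpE.1,
      fun hroot => (hB hroot).not_gt ((le_max_left _ _).trans_lt hpE.2)⟩
  set C' := max C 1
  have hupper : ∀ᶠ X : ℝ in atTop, (({p ∈ S | (p : ℝ) ≤ X}).ncard : ℝ) ≤
      E.ncard + C' * X ^ ε * Real.logb 2 (A * (C' * X ^ ε) ^ f.natDegree) := by
    filter_upwards [eventually_ge_atTop 1] with X hX
    have hXε : 1 ≤ X ^ ε := Real.one_le_rpow hX hε0.le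
    refine Nat.Primes.ncard_le_ncard_add_mul_logb hE hA hfA hgood
      (one_le_mul_of_one_le_of_one_le (le_max_right _ _) hXε) fun p hpS hpX => ?_
    calc (b p : ℝ) ≤ C * (p : ℝ) ^ ε := (le_abs_self _).trans (hC p hpS)
      _ ≤ C' * X ^ ε := by gcongr; exact le_max_left _ _
  have hsmall := isLittleO_const_add_mul_logb (K := E.ncard) f.natDegree hεε' (hε0.trans hεε')
    (by positivity : 0 < C') (Nat.cast_pos.2 hA)
  refine hsmall.not_eventually_const_mul_le hc ?_
    ((hcount.and hupper).mono fun X hX => hX.1.trans hX.2)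
  exact (eventually_gt_atTop 0).mono fun X hX => Real.rpow_pos_of_pos hX _

/-- Luca–Zudilin's second criterion: let `S` be an infinite set of primes and
`(b_p)_{p ∈ S}` integers with `b_p → ∞` and `b_p = O(p^ε)` for some `0 < ε < 1`.
If `#{p ≤ X : p ∈ S} ≫ X^{ε'}` for some `ε < ε' < 1` and all large `X`, then for
every nonzero integer polynomial `f` there are infinitely many `p ∈ S` with
`p ∤ f(b_p)`. -/
theorem statement4 (S : Set Nat.Primes) (hS : S.Infinite) (b : Nat.Primes → ℤ)
    (ε : ℝ) (hε0 : 0 < ε) (hε1 : ε < 1)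
    (htend : Tendsto b (atTop ⊓ 𝓟 S) atTop)
    (hO : ∃ C : ℝ, ∀ p ∈ S, |(b p : ℝ)| ≤ C * (p : ℝ) ^ ε)
    (hcount : ∃ ε' : ℝ, ε < ε' ∧ ε' < 1 ∧ ∃ c : ℝ, 0 < c ∧
      ∀ᶠ X : ℝ in atTop, c * X ^ ε' ≤ (({p ∈ S | (p : ℝ) ≤ X}).ncard : ℝ))
    (f : Polynomial ℤ) (hf : f ≠ 0) :
    {p ∈ S | ¬ ((p : ℕ) : ℤ) ∣ f.eval (b p)}.Infinite :=
  statement4_general S b ε hε0 htend hO hcount f hf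
end

section
/- The element (⌊√p⌋ mod p)_p of A is naively transcendental: for every nonzero polynomial f with integer coefficients, there exist infinitely many primes p such that p ∤ f(⌊√p⌋). -/
/-!
If all but finitely many primes `p` divided `f(⌊√p⌋)`, then for large `b` the primes `p` with
`⌊√p⌋ = b` would all exceed `b` and divide the nonzero integer `f(b)`, whose absolute value is
below `b ^ (deg f + 1)`; so there would be at most `deg f` of them. Since each of them is at
least `b²`, the sum of `1/p` over all primes would be at most a constant plus
`deg f * ∑ 1/b²`, contradicting the divergence of the sum of prime reciprocals.
-/

open Filter Finset Polynomial

theorem card_lt_of_forall_prime_gt_dvd {m b k : ℕ} (hm : m ≠ 0) (hmb : m < b ^ k)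
    {s : Finset ℕ} (hs : ∀ p ∈ s, p.Prime ∧ b < p ∧ p ∣ m) : s.card < k := by
  have hb : b ≠ 0 := by
    rintro rfl
    rcases k with _ | k <;> simp_all
  refine (pow_lt_pow_iff_right₀ (by omega : 1 < b + 1)).mp ?_
  calc (b + 1) ^ s.card ≤ ∏ p ∈ s, p := pow_card_le_prod _ _ _ fun p hp ↦ (hs p hp).2.1
    _ ≤ m := Nat.le_of_dvd (Nat.pos_of_ne_zero hm)
        (prod_primes_dvd m (fun p hp ↦ (hs p hp).1.prime) fun p hp ↦ (hs p hp).2.2)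
    _ < b ^ k := hmb
    _ ≤ (b + 1) ^ k := Nat.pow_le_pow_left b.le_succ k

theorem Polynomial.eventually_ne_zero_and_abs_eval_lt {f : ℤ[X]} (hf : f ≠ 0) :
    ∀ᶠ n : ℕ in atTop, f.eval (n : ℤ) ≠ 0 ∧ |f.eval (n : ℤ)| < (n : ℤ) ^ (f.natDegree + 1) := by
  have hdeg : f.degree < (X ^ (f.natDegree + 1) : ℤ[X]).degree := by
    rw [degree_X_pow]
    exact (degree_le_natDegree).trans_lt (by exact_mod_cast f.natDegree.lt_succ_self)
  have hsmall : ∀ᶠ x : ℤ in cofinite, |f.eval x| < |x| ^ (f.natDegree + 1) := by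
    simpa [← abs_pow] using (finite_abs_eval_le_of_degree_lt hdeg).eventually_cofinite_notMem
  rw [← Nat.cofinite_eq_atTop]
  filter_upwards [Nat.cast_injective.tendsto_cofinite.eventually
    ((eventually_cofinite_not_isRoot hf).and hsmall)] with n hn
  simpa using hn

theorem summable_indicator_one_div_of_card_sqrt_fiber_le {S : Set ℕ} {K : ℕ}
    (hS : ∀ b (u : Finset ℕ), ↑u ⊆ S → (∀ p ∈ u, p.sqrt = b) → u.card ≤ K) :
    Summable (S.indicator fun n : ℕ ↦ (1 : ℝ) / n) := by
  classical
  have hrecip : ∀ n : ℕ, (1 : ℝ) / n ≤ 1 / (n.sqrt : ℝ) ^ 2 := by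
    intro n
    rcases Nat.eq_zero_or_pos n with rfl | hn
    · simp
    have : 0 < n.sqrt := Nat.sqrt_pos.mpr hn
    exact one_div_le_one_div_of_le (by positivity) (by exact_mod_cast Nat.sqrt_le' n)
  have hsum : Summable fun b : ℕ ↦ (1 : ℝ) / (b : ℝ) ^ 2 :=
    Real.summable_one_div_nat_pow.mpr one_lt_two
  refine summable_of_sum_le (c := K * ∑' b : ℕ, (1 : ℝ) / (b : ℝ) ^ 2)
    (fun n ↦ Set.indicator_nonneg (fun _ _ ↦ by positivity) n) fun u ↦ ?_
  set v := u.filter (· ∈ S)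
  calc ∑ n ∈ u, S.indicator (fun n : ℕ ↦ (1 : ℝ) / n) n = ∑ n ∈ v, (1 : ℝ) / n := by
        simp only [v, sum_filter, Set.indicator_apply]
    _ = ∑ b ∈ v.image Nat.sqrt, ∑ n ∈ v with n.sqrt = b, (1 : ℝ) / n :=
        (sum_fiberwise_of_maps_to (fun _ hn ↦ mem_image_of_mem _ hn) _).symm
    _ ≤ ∑ b ∈ v.image Nat.sqrt, K * (1 / (b : ℝ) ^ 2) := by
        refine sum_le_sum fun b _ ↦ ?_
        calc ∑ n ∈ v with n.sqrt = b, (1 : ℝ) / n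
            ≤ ∑ n ∈ v with n.sqrt = b, 1 / (b : ℝ) ^ 2 :=
              sum_le_sum fun n hn ↦ (mem_filter.mp hn).2 ▸ hrecip n
          _ ≤ K * (1 / (b : ℝ) ^ 2) := by
              rw [sum_const, nsmul_eq_mul]
              gcongr
              exact_mod_cast hS b _ (fun n hn ↦ (mem_filter.mp (mem_filter.mp hn).1).2)
                fun n hn ↦ (mem_filter.mp hn).2
    _ = K * ∑ b ∈ v.image Nat.sqrt, 1 / (b : ℝ) ^ 2 := (mul_sum _ _ _).symm
    _ ≤ K * ∑' b : ℕ, (1 : ℝ) / (b : ℝ) ^ 2 := by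
        gcongr
        exact hsum.sum_le_tsum _ fun _ _ ↦ by positivity

/-- `(⌊√p⌋ mod p)_p` is naively transcendental: for every nonzero integer
polynomial `f` there are infinitely many primes `p` with `p ∤ f(⌊√p⌋)`. -/
theorem statement5 (f : Polynomial ℤ) (hf : f ≠ 0) :
    {p : ℕ | p.Prime ∧ ¬ (p : ℤ) ∣ f.eval (Nat.sqrt p : ℤ)}.Infinite := by
  by_contra hfin
  obtain ⟨N, hN⟩ := (Set.not_infinite.mp hfin).bddAbove
  obtain ⟨B, hB⟩ := eventually_atTop.mp (eventually_ne_zero_and_abs_eval_lt hf)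
  set S := {p : ℕ | p.Prime ∧ N < p ∧ B ^ 2 ≤ p}
  have hfiber : ∀ b (u : Finset ℕ), ↑u ⊆ S → (∀ p ∈ u, p.sqrt = b) → u.card ≤ f.natDegree := by
    intro b u huS hub
    rcases u.eq_empty_or_nonempty with rfl | ⟨q, hq⟩
    · simp
    obtain ⟨hf0, hfb⟩ := hB b (hub q hq ▸ Nat.le_sqrt'.mpr (huS hq).2.2)
    refine Nat.lt_succ_iff.mp (card_lt_of_forall_prime_gt_dvd (Int.natAbs_ne_zero.mpr hf0)
      (by zify; simpa using hfb) fun p hp ↦ ⟨(huS hp).1, ?_, ?_⟩)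
    · exact hub p hp ▸ Nat.sqrt_lt_self (huS hp).1.one_lt
    · have hdvd : (p : ℤ) ∣ f.eval (p.sqrt : ℤ) := by
        by_contra h
        exact absurd (hN ⟨(huS hp).1, h⟩) (not_le.mpr (huS hp).2.1)
      exact Int.natCast_dvd.mp (hub p hp ▸ hdvd)
  refine not_summable_one_div_on_primes <|
    (summable_indicator_one_div_of_card_sqrt_fiber_le hfiber).of_norm_bounded_eventually_nat ?_
  filter_upwards [eventually_gt_atTop N, eventually_ge_atTop (B ^ 2)] with n hNn hBn
  by_cases hn : n.Prime <;> simp [S, hn, hNn, hBn]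
end

section
/- Let q be a rational number and p a prime such that q and q−1 are both p-adic units or q ≡ 1 (mod p). Then for 0 ≤ k ≤ p−1, the q-binomial coefficient C(p−1, k)_q satisfies: C(p−1,k)_q ≡ C(I_p(q), k/ord_p(q)) (mod p) if ord_p(q) divides k, and C(p−1,k)_q ≡ 0 (mod p) otherwise. Here ord_p(q) is the multiplicative order of q mod p and I_p(q) = (p−1)/ord_p(q). -/
/-- Congruence of rationals modulo a prime `p`, as a congruence in `ℤ_(p)`:
`x ≡ y (mod p)` iff `x = y` or the `p`-adic valuation of `x - y` is positive. -/
def RatModEqP (p : ℕ) (x y : ℚ) : Prop := x = y ∨ 0 < padicValRat p (x - y)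

/-- The reduction of a rational number modulo `p` (meaningful when the rational
is a `p`-adic unit). -/
def ratRed (p : ℕ) (q : ℚ) : ZMod p := (q.num : ZMod p) * ((q.den : ZMod p))⁻¹

/-- The multiplicative order `ord_p(q)` of `q mod p`. -/
noncomputable def ordP (p : ℕ) (q : ℚ) : ℕ := orderOf (ratRed p q)

/-- The `q`-binomial (Gaussian binomial) coefficient `C(n,k)_q` as a polynomial
in `ℤ[q]`, via the Pascal-type recurrence `C(n+1,k+1)_q = q^(k+1) C(n,k+1)_q + C(n,k)_q`. -/
noncomputable def qBinom : ℕ → ℕ → Polynomial ℤ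
  | _, 0 => 1
  | 0, _ + 1 => 0
  | n + 1, k + 1 => qBinom n (k + 1) * Polynomial.X ^ (k + 1) + qBinom n k

/-!
Reduction modulo `p` is a ring homomorphism `ℤ_[p] → ZMod p`, so `C(p-1,k)_q mod p` is the
Gaussian binomial evaluated at `a = q mod p`, a primitive `d`-th root of unity for
`d = ord_p(q) ∣ p - 1`. At such a root the `q`-Lucas theorem
`C(n,k)_a = C(n / d, k / d) · C(n % d, k % d)_a` holds, because `C(d,j)_a = 0` for `0 < j < d`:
in `C(d,j)_q (q)_j (q)_{d-j} = (q)_d` only the right side contains the factor `1 - q^d`.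
For `n = p - 1` the second factor is `C(0, k % d)_a`, which is `1` if `d ∣ k` and `0` otherwise.
-/

open Polynomial

theorem Nat.mod_eq_sub_one_of_dvd_succ {n d : ℕ} (h : d ∣ n + 1) : n % d = d - 1 := by
  have h₁ := Nat.div_add_mod (n + 1) d
  have h₂ := Nat.div_add_mod n d
  rw [Nat.succ_div_of_dvd h, Nat.mod_eq_zero_of_dvd h, mul_add_one] at h₁
  omega

theorem Nat.succ_mod_of_not_dvd {n d : ℕ} (h : ¬ d ∣ n + 1) : (n + 1) % d = n % d + 1 := by
  have h₁ := Nat.div_add_mod (n + 1) d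
  have h₂ := Nat.div_add_mod n d
  rw [Nat.succ_div_of_not_dvd h] at h₁
  omega

theorem qBinom_zero_right (n : ℕ) : qBinom n 0 = 1 := by cases n <;> rfl

theorem qBinom_succ_succ (n k : ℕ) :
    qBinom (n + 1) (k + 1) = qBinom n (k + 1) * X ^ (k + 1) + qBinom n k := rfl

theorem qBinom_eq_zero_of_lt {n k : ℕ} (h : n < k) : qBinom n k = 0 := by
  induction n generalizing k with
  | zero => obtain ⟨k, rfl⟩ := Nat.exists_eq_succ_of_ne_zero h.ne'; rfl
  | succ n ih =>
    obtain ⟨k, rfl⟩ := Nat.exists_eq_succ_of_ne_zero (by omega : k ≠ 0)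
    rw [qBinom_succ_succ, ih (by omega), ih (by omega), zero_mul, add_zero]

theorem qBinom_self (n : ℕ) : qBinom n n = 1 := by
  induction n with
  | zero => rfl
  | succ n ih => rw [qBinom_succ_succ, qBinom_eq_zero_of_lt n.lt_succ_self, ih, zero_mul, zero_add]

noncomputable def qPochhammer (n : ℕ) : ℤ[X] := ∏ i ∈ Finset.range n, (1 - X ^ (i + 1))

theorem qPochhammer_succ (n : ℕ) : qPochhammer (n + 1) = qPochhammer n * (1 - X ^ (n + 1)) :=
  Finset.prod_range_succ _ n

theorem qBinom_mul_qPochhammer {n k : ℕ} (h : k ≤ n) :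
    qBinom n k * qPochhammer k * qPochhammer (n - k) = qPochhammer n := by
  induction n generalizing k with
  | zero =>
    obtain rfl : k = 0 := by omega
    simp [qBinom_zero_right, qPochhammer]
  | succ n ih =>
    rcases k with _ | k
    · simp [qBinom_zero_right, qPochhammer]
    rcases (Nat.le_of_lt_succ h).eq_or_lt with rfl | hk
    · simp [qBinom_self, qPochhammer]
    obtain ⟨m, rfl⟩ := Nat.exists_eq_add_of_lt hk
    have h₁ : qBinom (k + m + 1) (k + 1) * qPochhammer (k + 1) * qPochhammer m
        = qPochhammer (k + m + 1) := by simpa using ih hk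
    have h₂ : qBinom (k + m + 1) k * qPochhammer k * qPochhammer (m + 1)
        = qPochhammer (k + m + 1) := by
      simpa [Nat.add_sub_cancel_left, add_assoc] using ih (k := k) (by omega)
    rw [show k + m + 1 + 1 - (k + 1) = m + 1 by omega, qBinom_succ_succ]
    simp only [qPochhammer_succ] at h₁ h₂ ⊢
    linear_combination X ^ (k + 1) * (1 - X ^ (m + 1)) * h₁ + (1 - X ^ (k + 1)) * h₂

section PrimitiveRoot

variable {R : Type*} [CommRing R] {a : R} {d : ℕ}

theorem aeval_qPochhammer_eq_zero (ha : IsPrimitiveRoot a d) (hd : 0 < d) :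
    aeval a (qPochhammer d) = 0 := by
  obtain ⟨n, rfl⟩ := Nat.exists_eq_succ_of_ne_zero hd.ne'
  simp [qPochhammer_succ, ha.pow_eq_one]

variable [IsDomain R]

theorem aeval_qPochhammer_ne_zero (ha : IsPrimitiveRoot a d) {n : ℕ} (hn : n < d) :
    aeval a (qPochhammer n) ≠ 0 := by
  simp only [qPochhammer, map_prod, map_sub, map_one, map_pow, aeval_X]
  exact Finset.prod_ne_zero_iff.2 fun i hi ↦ sub_ne_zero.2
    (ha.pow_ne_one_of_pos_of_lt i.succ_ne_zero (by simp at hi; omega)).symm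

theorem aeval_qBinom_eq_zero (ha : IsPrimitiveRoot a d) {j : ℕ} (hj₀ : 0 < j) (hjd : j < d) :
    aeval a (qBinom d j) = 0 := by
  have h := congrArg (aeval a) (qBinom_mul_qPochhammer hjd.le)
  rw [map_mul, map_mul, aeval_qPochhammer_eq_zero ha (by omega)] at h
  simpa [aeval_qPochhammer_ne_zero ha hjd, aeval_qPochhammer_ne_zero ha (by omega : d - j < d)]
    using h

theorem aeval_qBinom_eq_choose_mul (ha : IsPrimitiveRoot a d) (n k : ℕ) :
    aeval a (qBinom n k) = (n / d).choose (k / d) * aeval a (qBinom (n % d) (k % d)) := by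
  rcases d with _ | e
  · simp
  have hd : 0 < e + 1 := e.succ_pos
  induction n generalizing k with
  | zero =>
    rcases k.eq_zero_or_pos with rfl | hk
    · simp [qBinom_zero_right]
    by_cases hdk : e + 1 ∣ k
    · simp [qBinom_eq_zero_of_lt hk,
        Nat.choose_eq_zero_of_lt (Nat.div_pos (Nat.le_of_dvd hk hdk) hd)]
    · simp [qBinom_eq_zero_of_lt hk,
        qBinom_eq_zero_of_lt (Nat.pos_of_ne_zero (mt Nat.dvd_of_mod_eq_zero hdk))]
  | succ n ih =>
    rcases k with _ | k
    · simp [qBinom_zero_right]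
    have hpow : a ^ (k + 1) = a ^ ((k + 1) % (e + 1)) := by rw [ha.eq_orderOf, pow_mod_orderOf]
    rw [qBinom_succ_succ, map_add, map_mul, map_pow, aeval_X, ih, ih, hpow]
    by_cases hn : e + 1 ∣ n + 1 <;> by_cases hk : e + 1 ∣ k + 1
    · rw [Nat.succ_div_of_dvd hn, Nat.succ_div_of_dvd hk, Nat.mod_eq_zero_of_dvd hn,
        Nat.mod_eq_zero_of_dvd hk, Nat.mod_eq_sub_one_of_dvd_succ hn,
        Nat.mod_eq_sub_one_of_dvd_succ hk, Nat.choose_succ_succ']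
      simp [qBinom_zero_right, qBinom_self, add_comm]
    · -- the two surviving terms are the recurrence for `C(e+1, k % (e+1) + 1)_a = 0`
      have hs := Nat.succ_mod_of_not_dvd hk
      have hvanish := aeval_qBinom_eq_zero ha (j := k % (e + 1) + 1) (by omega)
        (by rw [← hs]; exact Nat.mod_lt _ hd)
      rw [qBinom_succ_succ, map_add, map_mul, map_pow, aeval_X] at hvanish
      rw [Nat.succ_div_of_dvd hn, Nat.succ_div_of_not_dvd hk, Nat.mod_eq_zero_of_dvd hn, hs,
        Nat.mod_eq_sub_one_of_dvd_succ hn, qBinom_eq_zero_of_lt (Nat.succ_pos _)]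
      simp only [Nat.add_sub_cancel, map_zero, mul_zero]
      linear_combination ((n / (e + 1)).choose (k / (e + 1)) : R) * hvanish
    · have hr := Nat.succ_mod_of_not_dvd hn
      have hlt : n % (e + 1) < e := by have := Nat.mod_lt (n + 1) hd; omega
      rw [Nat.succ_div_of_not_dvd hn, Nat.succ_div_of_dvd hk, hr, Nat.mod_eq_zero_of_dvd hk,
        Nat.mod_eq_sub_one_of_dvd_succ hk, Nat.add_sub_cancel, qBinom_eq_zero_of_lt hlt]
      simp [qBinom_zero_right]
    · rw [Nat.succ_div_of_not_dvd hn, Nat.succ_div_of_not_dvd hk, Nat.succ_mod_of_not_dvd hn,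
        Nat.succ_mod_of_not_dvd hk, qBinom_succ_succ, map_add, map_mul, map_pow, aeval_X]
      ring

theorem aeval_qBinom_of_dvd (ha : IsPrimitiveRoot a d) {n : ℕ} (hn : d ∣ n) (k : ℕ) :
    aeval a (qBinom n k) = if d ∣ k then ((n / d).choose (k / d) : R) else 0 := by
  rw [aeval_qBinom_eq_choose_mul ha, Nat.mod_eq_zero_of_dvd hn]
  split_ifs with hk
  · simp [Nat.mod_eq_zero_of_dvd hk, qBinom_zero_right]
  · simp [qBinom_eq_zero_of_lt (Nat.pos_of_ne_zero (mt Nat.dvd_of_mod_eq_zero hk))]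

end PrimitiveRoot

theorem RingHom.map_aeval_int {A B : Type*} [CommRing A] [CommRing B] (f : A →+* B) (x : A)
    (P : ℤ[X]) : f (aeval x P) = aeval (f x) P :=
  (aeval_algHom_apply f.toIntAlgHom x P).symm

section Padic

variable {p : ℕ} [Fact p.Prime]

theorem PadicInt.toZMod_eq_zero_iff {z : ℤ_[p]} : toZMod z = 0 ↔ ‖z‖ < 1 := by
  rw [← RingHom.mem_ker, ker_toZMod, IsLocalRing.mem_maximalIdeal, mem_nonunits]

theorem PadicInt.toZMod_eq_ratRed {z : ℤ_[p]} {x : ℚ} (hz : (z : ℚ_[p]) = x) :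
    toZMod z = ratRed p x := by
  have hden : (x.den : ZMod p) ≠ 0 := by
    simpa using ((isUnit_den x (hz ▸ z.2)).map toZMod).ne_zero
  have hnum : z * x.den = x.num := by
    apply PadicInt.ext
    rw [coe_mul, hz, coe_natCast, coe_intCast]
    exact_mod_cast Rat.mul_den_eq_num x
  rw [ratRed, eq_mul_inv_iff_mul_eq₀ hden]
  simpa using congrArg toZMod hnum

theorem norm_ratCast_lt_one_iff {x : ℚ} : ‖(x : ℚ_[p])‖ < 1 ↔ x = 0 ∨ 0 < padicValRat p x := by
  rcases eq_or_ne x 0 with rfl | hx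
  · simp
  rw [Padic.norm_eq_zpow_neg_valuation (by exact_mod_cast hx), Padic.valuation_ratCast,
    zpow_lt_one_iff_right₀ (by exact_mod_cast (Fact.out : p.Prime).one_lt)]
  simp [hx]

theorem ratModEqP_iff_norm_lt_one {x y : ℚ} : RatModEqP p x y ↔ ‖((x - y : ℚ) : ℚ_[p])‖ < 1 := by
  rw [norm_ratCast_lt_one_iff, sub_eq_zero, RatModEqP]

theorem norm_ratCast_eq_one_of_padicValRat_eq_zero {q : ℚ} (hq : q ≠ 0) (hv : padicValRat p q = 0) :
    ‖(q : ℚ_[p])‖ = 1 := by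
  rw [Padic.norm_eq_zpow_neg_valuation (by exact_mod_cast hq), Padic.valuation_ratCast, hv,
    neg_zero, zpow_zero]

theorem norm_ratCast_eq_one_of_ratModEqP_one {q : ℚ} (hq : RatModEqP p q 1) :
    ‖(q : ℚ_[p])‖ = 1 := by
  rw [ratModEqP_iff_norm_lt_one] at hq
  have h := Padic.norm_eq_of_norm_sub_lt_right (z1 := (q : ℚ_[p])) (z2 := 1) (by simpa using hq)
  rwa [norm_one] at h

theorem ratRed_ne_zero_of_norm_eq_one {q : ℚ} (hq : ‖(q : ℚ_[p])‖ = 1) : ratRed p q ≠ 0 := by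
  obtain ⟨z, hz⟩ : ∃ z : ℤ_[p], (z : ℚ_[p]) = q := ⟨⟨q, hq.le⟩, rfl⟩
  rw [← PadicInt.toZMod_eq_ratRed hz, Ne, PadicInt.toZMod_eq_zero_iff, PadicInt.norm_def, hz, hq]
  exact lt_irrefl 1

theorem ratModEqP_aeval_iff {q : ℚ} (hq : ‖(q : ℚ_[p])‖ ≤ 1) (P : ℤ[X]) (c : ℤ) :
    RatModEqP p (aeval q P) c ↔ aeval (ratRed p q) P = c := by
  obtain ⟨z, hz⟩ : ∃ z : ℤ_[p], (z : ℚ_[p]) = q := ⟨⟨q, hq⟩, rfl⟩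
  have hcast : ((aeval z P - c : ℤ_[p]) : ℚ_[p]) = ((aeval q P - c : ℚ) : ℚ_[p]) := by
    have h₁ : ((aeval z P : ℤ_[p]) : ℚ_[p]) = aeval (q : ℚ_[p]) P := by
      rw [← hz]
      exact PadicInt.Coe.ringHom.map_aeval_int z P
    have h₂ : ((aeval q P : ℚ) : ℚ_[p]) = aeval (q : ℚ_[p]) P :=
      (Rat.castHom ℚ_[p]).map_aeval_int q P
    rw [PadicInt.coe_sub, PadicInt.coe_intCast, Rat.cast_sub, Rat.cast_intCast, h₁, h₂]
  rw [ratModEqP_iff_norm_lt_one, ← hcast, ← PadicInt.norm_def, ← PadicInt.toZMod_eq_zero_iff,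
    map_sub, map_intCast, RingHom.map_aeval_int, PadicInt.toZMod_eq_ratRed hz, sub_eq_zero]

end Padic

/-- Anzawa–Funakura's congruence for `q`-binomial coefficients: if `q` and `q - 1`
are `p`-adic units, or `q ≡ 1 (mod p)`, then `C(p-1,k)_q ≡ C(I_p(q), k/ord_p(q)) (mod p)`
when `ord_p(q) ∣ k`, and `C(p-1,k)_q ≡ 0 (mod p)` otherwise. -/
theorem statement6 (q : ℚ) (p : ℕ) (hp : p.Prime)
    (hq : ((q ≠ 0 ∧ padicValRat p q = 0) ∧ (q - 1 ≠ 0 ∧ padicValRat p (q - 1) = 0))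
      ∨ RatModEqP p q 1) :
    ∀ k : ℕ, k ≤ p - 1 →
      (ordP p q ∣ k →
        RatModEqP p (Polynomial.aeval q (qBinom (p - 1) k))
          ((Nat.choose ((p - 1) / ordP p q) (k / ordP p q) : ℚ))) ∧
      (¬ ordP p q ∣ k → RatModEqP p (Polynomial.aeval q (qBinom (p - 1) k)) 0) := by
  have := Fact.mk hp
  have hq_unit : ‖(q : ℚ_[p])‖ = 1 := by
    rcases hq with ⟨⟨hq₀, hv⟩, -⟩ | hq₁
    · exact norm_ratCast_eq_one_of_padicValRat_eq_zero hq₀ hv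
    · exact norm_ratCast_eq_one_of_ratModEqP_one hq₁
  have hprim : IsPrimitiveRoot (ratRed p q) (ordP p q) := .orderOf _
  have hdvd : ordP p q ∣ p - 1 :=
    ZMod.orderOf_dvd_card_sub_one (ratRed_ne_zero_of_norm_eq_one hq_unit)
  intro k _
  have hmod := aeval_qBinom_of_dvd hprim hdvd k
  refine ⟨fun hk ↦ ?_, fun hk ↦ ?_⟩
  · rw [if_pos hk] at hmod
    exact_mod_cast (ratModEqP_aeval_iff hq_unit.le _ _).2 (by exact_mod_cast hmod)
  · rw [if_neg hk] at hmod
    exact_mod_cast (ratModEqP_aeval_iff hq_unit.le _ 0).2 (by exact_mod_cast hmod)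
end

section
/- The elements (⌊log p⌋ mod p)_p and (⌊log log p⌋ mod p)_p of A are algebraically independent over ℚ: for every nonzero polynomial F(x,y) with integer coefficients, there exist infinitely many primes p such that p ∤ F(⌊log p⌋, ⌊log log p⌋). -/
/-!
Write `a = ⌊log p⌋` and `b = ⌊log log p⌋`, so that `e ^ b < a + 1` and `e ^ a < p + 1`: every
polynomial in `b` is eventually below `a`, and every polynomial in `a` eventually below `p`.
Expanding `F = ∑ cᵢ(y) xⁱ` in `x`, the leading coefficient `cₙ(b)` is eventually a nonzero
integer, while the lower coefficients are `O(b ^ E)`, hence smaller than `a`; so the leading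
term dominates and `F(a, b) ≠ 0`. On the other hand `|F(a, b)| = O(a ^ deg F) < p`, so `p` cannot
divide the nonzero integer `F(a, b)`.
-/

open Filter Polynomial

namespace Polynomial

theorem eval_ne_zero_of_sum_abs_coeff_lt {q : ℤ[X]} (hq : q ≠ 0) {a : ℤ}
    (ha : ∑ i ∈ q.support, |q.coeff i| < a) : q.eval a ≠ 0 := by
  set n := q.natDegree
  have hn : n ∈ q.support := natDegree_mem_support_of_nonzero hq
  have hlead : 1 ≤ |q.coeff n| := Int.one_le_abs (mem_support_iff.1 hn)
  set T := ∑ i ∈ q.support.erase n, q.coeff i * a ^ i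
  set R := ∑ i ∈ q.support.erase n, |q.coeff i|
  have hsum : ∑ i ∈ q.support, |q.coeff i| = R + |q.coeff n| :=
    (Finset.sum_erase_add _ _ hn).symm
  have ha0 : 0 < a := by
    have : 0 ≤ R := Finset.sum_nonneg fun i _ => abs_nonneg (q.coeff i)
    omega
  have hlower : a * |T| ≤ R * a ^ n :=
    calc a * |T| ≤ a * ∑ i ∈ q.support.erase n, |q.coeff i * a ^ i| :=
          mul_le_mul_of_nonneg_left (Finset.abs_sum_le_sum_abs _ _) ha0.le
      _ ≤ ∑ i ∈ q.support.erase n, |q.coeff i| * a ^ n := by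
          rw [Finset.mul_sum]
          refine Finset.sum_le_sum fun i hi => ?_
          have hin : i < n := lt_of_le_of_ne
            (le_natDegree_of_mem_supp i (Finset.mem_of_mem_erase hi)) (Finset.ne_of_mem_erase hi)
          rw [abs_mul, abs_pow, abs_of_pos ha0, mul_left_comm, ← pow_succ']
          exact mul_le_mul_of_nonneg_left (pow_le_pow_right₀ (by omega) hin) (abs_nonneg _)
      _ = R * a ^ n := (Finset.sum_mul _ _ _).symm
  intro h
  rw [eval_eq_sum, Polynomial.sum_def, ← Finset.sum_erase_add _ _ hn] at h
  have htop : |q.coeff n| * a ^ n = |T| := by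
    rw [← abs_of_pos ha0, ← abs_pow, ← abs_mul, eq_neg_of_add_eq_zero_right h, abs_neg]
  have hpow : 0 < a ^ n := pow_pos ha0 n
  have : a * a ^ n ≤ R * a ^ n :=
    calc a * a ^ n ≤ a * |T| := by
          rw [← htop]
          exact mul_le_mul_of_nonneg_left (le_mul_of_one_le_left hpow.le hlead) ha0.le
      _ ≤ R * a ^ n := hlower
  have := le_of_mul_le_mul_right this hpow
  omega

theorem eventually_eval_ne_zero {q : ℤ[X]} (hq : q ≠ 0) : ∀ᶠ b in atTop, q.eval b ≠ 0 :=
  (eventually_gt_atTop _).mono fun _ hb => eval_ne_zero_of_sum_abs_coeff_lt hq hb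

end Polynomial

namespace MvPolynomial

theorem abs_eval_le {R σ : Type*} [CommRing R] [LinearOrder R] [IsStrictOrderedRing R]
    (f : MvPolynomial σ R) {x : σ → R} {a : R} (ha : 1 ≤ a) (hx : ∀ i, |x i| ≤ a) :
    |eval x f| ≤ (∑ m ∈ f.support, |coeff m f|) * a ^ f.totalDegree := by
  rw [eval_eq, Finset.sum_mul]
  refine (Finset.abs_sum_le_sum_abs _ _).trans (Finset.sum_le_sum fun m hm => ?_)
  rw [abs_mul, Finset.abs_prod]
  gcongr
  calc ∏ i ∈ m.support, |x i ^ m i| ≤ ∏ i ∈ m.support, a ^ m i :=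
        Finset.prod_le_prod (fun _ _ => abs_nonneg _) fun i _ => by
          rw [abs_pow]; exact pow_le_pow_left₀ (abs_nonneg _) (hx i) _
    _ = a ^ m.sum fun _ e => e := Finset.prod_pow_eq_pow_sum _ _ _
    _ ≤ a ^ f.totalDegree := pow_le_pow_right₀ ha (le_totalDegree hm)

theorem eventually_eval_single_ne_zero {g : MvPolynomial (Fin 1) ℤ} (hg : g ≠ 0) :
    ∀ᶠ b in atTop, eval ![b] g ≠ 0 := by
  have hq : uniqueAlgEquiv ℤ (Fin 1) g ≠ 0 := (map_ne_zero_iff _ (AlgEquiv.injective _)).2 hg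
  filter_upwards [Polynomial.eventually_eval_ne_zero hq] with b hb
  have : ![b] = fun _ => b := by ext i; fin_cases i; rfl
  rw [this, eval, coe_eval₂Hom, ← eval₂_const_uniqueAlgEquiv]
  exact hb

variable {ι : Type*} {l : Filter ι} {F : MvPolynomial (Fin 2) ℤ}

theorem eventually_eval_ne_zero_of_pow_lt (hF : F ≠ 0) {a b : ι → ℤ} (hb : Tendsto b l atTop)
    (hba : ∀ (K : ℤ) (d : ℕ), ∀ᶠ i in l, K * b i ^ d < a i) :
    ∀ᶠ i in l, eval ![a i, b i] F ≠ 0 := by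
  set P := finSuccEquiv ℤ 1 F
  have hP : P ≠ 0 := (map_ne_zero_iff _ (AlgEquiv.injective _)).2 hF
  set S : ℕ → ℤ := fun j => ∑ m ∈ (P.coeff j).support, |coeff m (P.coeff j)|
  set E := P.support.sup fun j => (P.coeff j).totalDegree
  filter_upwards [hb.eventually (eventually_eval_single_ne_zero (leadingCoeff_ne_zero.2 hP)),
    hb.eventually_ge_atTop 1, hba (∑ j ∈ P.support, S j) E] with i hlead hb1 hab
  set q := P.map (eval ![b i])
  have hq : q ≠ 0 := fun h => hlead <| by
    rw [leadingCoeff, ← Polynomial.coeff_map]; exact congrArg (Polynomial.coeff · _) h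
  have hcoeff : ∀ j ∈ P.support, |q.coeff j| ≤ S j * b i ^ E := fun j hj => by
    rw [Polynomial.coeff_map]
    refine (abs_eval_le _ hb1 fun k => ?_).trans ?_
    · fin_cases k; simp [abs_of_nonneg (by omega : (0 : ℤ) ≤ b i)]
    · exact mul_le_mul_of_nonneg_left
        (pow_le_pow_right₀ hb1 (Finset.le_sup (f := fun j => (P.coeff j).totalDegree) hj))
        (Finset.sum_nonneg fun _ _ => abs_nonneg _)
  have hF_eq : eval ![a i, b i] F = q.eval (a i) := eval_eq_eval_mv_eval' ![b i] (a i) F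
  rw [hF_eq]
  refine Polynomial.eval_ne_zero_of_sum_abs_coeff_lt hq (lt_of_le_of_lt ?_ hab)
  rw [Finset.sum_mul]
  calc ∑ j ∈ q.support, |q.coeff j| ≤ ∑ j ∈ P.support, |q.coeff j| :=
        Finset.sum_le_sum_of_subset_of_nonneg (Polynomial.support_map_subset _ _) fun _ _ _ => abs_nonneg _
    _ ≤ ∑ j ∈ P.support, S j * b i ^ E := Finset.sum_le_sum hcoeff

theorem eventually_not_dvd_eval (hF : F ≠ 0) {a b n : ι → ℤ} (hb : Tendsto b l atTop)
    (hba : ∀ (K : ℤ) (d : ℕ), ∀ᶠ i in l, K * b i ^ d < a i)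
    (han : ∀ (K : ℤ) (d : ℕ), ∀ᶠ i in l, K * a i ^ d < n i) :
    ∀ᶠ i in l, ¬ n i ∣ eval ![a i, b i] F := by
  filter_upwards [eventually_eval_ne_zero_of_pow_lt hF hb hba, hb.eventually_ge_atTop 1,
    hba 1 1, han (∑ m ∈ F.support, |coeff m F|) F.totalDegree]
    with i hne hb1 hb_lt_a hbound hdvd
  rw [one_mul, pow_one] at hb_lt_a
  have hx : ∀ k, |![a i, b i] k| ≤ a i := fun k => by
    fin_cases k <;> simp [abs_le] <;> omega
  exact hne (Int.eq_zero_of_abs_lt_dvd hdvd ((abs_eval_le F (by omega) hx).trans_lt hbound))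

end MvPolynomial

theorem Real.eventually_mul_pow_add_one_le_exp (c : ℝ) (d : ℕ) :
    ∀ᶠ x in atTop, c * x ^ d + 1 ≤ Real.exp x := by
  filter_upwards [((isLittleO_pow_exp_atTop.const_mul_left c).add
    (isLittleO_pow_exp_atTop (n := 0))).bound one_pos] with x hx
  simpa [abs_of_pos (Real.exp_pos x)] using (le_abs_self _).trans hx

theorem Real.exp_floor_log_lt {x : ℝ} (hx : 0 < x) : Real.exp ⌊Real.log x⌋ < ⌊x⌋ + 1 :=
  calc Real.exp ⌊Real.log x⌋ ≤ Real.exp (Real.log x) := Real.exp_le_exp.2 (Int.floor_le _)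
    _ = x := Real.exp_log hx
    _ < ⌊x⌋ + 1 := Int.lt_floor_add_one x

theorem eventually_mul_pow_lt_of_exp_lt {ι : Type*} {l : Filter ι} {u v : ι → ℤ}
    (hu : Tendsto u l atTop) (huv : ∀ᶠ i in l, Real.exp (u i) < v i + 1) (K : ℤ) (d : ℕ) :
    ∀ᶠ i in l, K * u i ^ d < v i := by
  filter_upwards [(tendsto_intCast_atTop_atTop.comp hu).eventually
    (Real.eventually_mul_pow_add_one_le_exp K d), huv] with i hexp huv
  exact_mod_cast (show (K * u i ^ d : ℝ) < v i by simp only [Function.comp] at hexp; linarith)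

/-- `(⌊log p⌋ mod p)_p` and `(⌊log log p⌋ mod p)_p` are algebraically independent
over `ℚ`: for every nonzero `F ∈ ℤ[x,y]` there are infinitely many primes `p`
with `p ∤ F(⌊log p⌋, ⌊log log p⌋)`. -/
theorem statement11 (F : MvPolynomial (Fin 2) ℤ) (hF : F ≠ 0) :
    {p : ℕ | p.Prime ∧
      ¬ (p : ℤ) ∣ MvPolynomial.eval ![⌊Real.log p⌋, ⌊Real.log (Real.log p)⌋] F}.Infinite := by
  have hlog : Tendsto (fun p : ℕ => Real.log p) atTop atTop :=
    Real.tendsto_log_atTop.comp tendsto_natCast_atTop_atTop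
  have hloglog : Tendsto (fun p : ℕ => ⌊Real.log (Real.log p)⌋) atTop atTop :=
    tendsto_floor_atTop.comp (Real.tendsto_log_atTop.comp hlog)
  have hlogp : Tendsto (fun p : ℕ => ⌊Real.log p⌋) atTop atTop := tendsto_floor_atTop.comp hlog
  have hndvd : ∀ᶠ p : ℕ in atTop,
      ¬ (p : ℤ) ∣ MvPolynomial.eval ![⌊Real.log p⌋, ⌊Real.log (Real.log p)⌋] F :=
    MvPolynomial.eventually_not_dvd_eval hF hloglog
      (eventually_mul_pow_lt_of_exp_lt hloglog <| (hlog.eventually_gt_atTop 0).mono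
        fun _ hp => Real.exp_floor_log_lt hp)
      (eventually_mul_pow_lt_of_exp_lt hlogp <| (eventually_gt_atTop 0).mono
        fun p hp => by simpa using Real.exp_floor_log_lt (Nat.cast_pos.2 hp))
  exact Nat.frequently_atTop_iff_infinite.1
    ((Nat.frequently_atTop_iff_infinite.2 Nat.infinite_setOfPred_prime).and_eventually hndvd)
end

section
/- Let α = u/v > 1 with u, v coprime positive integers, and let p be a prime dividing Φ_ℓ(u,v) = (u^ℓ − v^ℓ)/(u−v) for a prime ℓ with ℓ < p. Write Φ_ℓ(u,v) = p·t_p. Then the Fermat quotients satisfy ℓ·q_p(α) ≡ −v^{−ℓ}(u − v)·t_p (mod p), where q_p(x) = (x^{p−1} − 1)/p. -/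
/-- The Fermat quotient `q_p(α) = (α^{p-1} - 1)/p` as a rational number. -/
def fermatQuot (p : ℕ) (α : ℚ) : ℚ := (α ^ (p - 1) - 1) / p

theorem ratModEqP_of_sub_eq_div {p : ℕ} (hp : p.Prime) {x y : ℚ} {N D : ℤ}
    (hN : (p : ℤ) ∣ N) (hD : ¬ (p : ℤ) ∣ D) (h : x - y = N / D) : RatModEqP p x y := by
  have : Fact p.Prime := ⟨hp⟩
  obtain ⟨k, rfl⟩ := hN
  rcases eq_or_ne k 0 with rfl | hk
  · left
    simpa [sub_eq_zero] using h
  · right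
    have hD0 : D ≠ 0 := by rintro rfl; exact hD (dvd_zero _)
    rw [h, Int.cast_mul, Int.cast_natCast, padicValRat.div (by simp [hp.ne_zero, hk]) (by simpa),
      padicValRat.mul (by simp [hp.ne_zero]) (by simpa), padicValRat.self hp.one_lt,
      padicValRat.of_int, padicValRat.of_int, padicValInt.eq_zero_of_not_dvd hD]
    omega

theorem isCoprime_of_dvd_pow_sub_pow {p u v : ℤ} {n : ℕ} (hn : n ≠ 0) (huv : IsCoprime u v)
    (h : p ∣ u ^ n - v ^ n) : IsCoprime v p := by
  have hcop : IsCoprime (u ^ n - v ^ n) (v ^ n) := by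
    simpa [sub_eq_add_neg] using huv.pow.add_mul_right_left (-1)
  exact ((IsCoprime.pow_right_iff (Nat.pos_of_ne_zero hn)).mp
    (hcop.of_isCoprime_of_dvd_left h)).symm

theorem dvd_sub_of_add_mul_pow_sub_pow_eq {R : Type*} [CommRing R] [IsDomain R] {p a b x y : R}
    {m n : ℕ} (hp : p ≠ 0) (h : (a + p * x) ^ m - a ^ m = (b + p * y) ^ n - b ^ n) :
    p ∣ m * a ^ (m - 1) * x - n * b ^ (n - 1) * y := by
  have hsq {c z : R} (k : ℕ) : p * p ∣ (c + p * z) ^ k - c ^ (k - 1) * (p * z) * k - c ^ k :=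
    (mul_dvd_mul (dvd_mul_right p z) (dvd_mul_right p z)).trans
      (sq (p * z) ▸ sq_dvd_add_pow_sub_sub (p * z) c k)
  rw [← mul_dvd_mul_iff_left hp]
  convert dvd_sub (hsq (c := b) (z := y) n) (hsq (c := a) (z := x) m) using 1
  linear_combination h

theorem dvd_mul_pow_mul_add_pow_mul {u v w s : ℤ} {ℓ p : ℕ} (hp : 0 < p)
    (hw : u ^ (p - 1) - v ^ (p - 1) = p * w) (hs : u ^ ℓ = v ^ ℓ + p * s) :
    (p : ℤ) ∣ ℓ * (v ^ (p - 1)) ^ (ℓ - 1) * w + (v ^ ℓ) ^ (p - 2) * s := by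
  have key := dvd_sub_of_add_mul_pow_sub_pow_eq (p := (p : ℤ)) (a := v ^ (p - 1)) (x := w)
    (m := ℓ) (b := v ^ ℓ) (y := s) (n := p - 1) (by exact_mod_cast hp.ne') (by
      rw [← hs, ← eq_add_of_sub_eq' hw, ← pow_mul, ← pow_mul, ← pow_mul, ← pow_mul, mul_comm ℓ])
  rw [Nat.cast_pred hp, Nat.sub_sub] at key
  exact (dvd_add key (dvd_mul_right (p : ℤ) ((v ^ ℓ) ^ (p - 2) * s))).trans (dvd_of_eq (by ring))

theorem mul_fermatQuot_add_div_eq {u v w s : ℤ} {ℓ p : ℕ} (hv : v ≠ 0) (hℓ : 0 < ℓ)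
    (hp : 2 ≤ p) (hw : u ^ (p - 1) - v ^ (p - 1) = p * w) :
    ℓ * fermatQuot p ((u : ℚ) / v) + s / (v : ℚ) ^ ℓ =
      ((ℓ * (v ^ (p - 1)) ^ (ℓ - 1) * w + (v ^ ℓ) ^ (p - 2) * s : ℤ) : ℚ) /
        ((v ^ ℓ) ^ (p - 1) : ℤ) := by
  obtain ⟨m, rfl⟩ := Nat.exists_eq_add_of_le' hℓ
  obtain ⟨n, rfl⟩ := Nat.exists_eq_add_of_le' hp
  have hwQ : (u : ℚ) ^ (n + 1) - v ^ (n + 1) = (n + 2) * w := by exact_mod_cast hw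
  simp only [fermatQuot, div_pow, Nat.add_sub_cancel]
  push_cast
  field_simp
  linear_combination ((m + 1) * (v : ℚ) ^ (m + 1) * ((v : ℚ) ^ (m + 1)) ^ (n + 1)) * hwQ

theorem statement15_general (u v : ℤ) (hcop : IsCoprime u v)
    (ℓ p : ℕ) (hℓ : ℓ.Prime) (hp : p.Prime) (t : ℤ)
    (hΦ : ∑ i ∈ Finset.range ℓ, u ^ i * v ^ (ℓ - 1 - i) = (p : ℤ) * t) :
    RatModEqP p ((ℓ : ℚ) * fermatQuot p ((u : ℚ) / (v : ℚ)))
      (-(((u : ℚ) - (v : ℚ)) * (t : ℚ)) / (v : ℚ) ^ ℓ) := by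
  set s := (u - v) * t
  have hs : u ^ ℓ = v ^ ℓ + p * s := by
    linear_combination (u - v) * hΦ - geom_sum₂_mul u v ℓ
  have hvp : IsCoprime v p := isCoprime_of_dvd_pow_sub_pow hℓ.ne_zero hcop ⟨s, by rw [hs]; ring⟩
  have hup : IsCoprime u p :=
    isCoprime_of_dvd_pow_sub_pow hℓ.ne_zero hcop.symm ⟨-s, by rw [hs]; ring⟩
  obtain ⟨w, hw⟩ : (p : ℤ) ∣ u ^ (p - 1) - v ^ (p - 1) :=
    ((Int.ModEq.pow_card_sub_one_eq_one hp hup).trans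
      (Int.ModEq.pow_card_sub_one_eq_one hp hvp).symm).symm.dvd
  have hD : ¬ (p : ℤ) ∣ (v ^ ℓ) ^ (p - 1) :=
    (Nat.prime_iff_prime_int.mp hp).coprime_iff_not_dvd.mp hvp.pow_left.pow_left.symm
  have hv : v ≠ 0 := by
    rintro rfl
    exact hD (by simp [hℓ.ne_zero, Nat.sub_ne_zero_of_lt hp.one_lt])
  refine ratModEqP_of_sub_eq_div hp (dvd_mul_pow_mul_add_pow_mul hp.pos hw hs) hD ?_
  rw [neg_div, sub_neg_eq_add, ← mul_fermatQuot_add_div_eq hv hℓ.pos hp.two_le hw]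
  simp [s]

/-- Let `α = u/v > 1` with `u, v` coprime, `ℓ < p` primes, and
`Φ_ℓ(u,v) = p·t`. Then `ℓ·q_p(α) ≡ -v^{-ℓ}(u - v)·t (mod p)`. -/
theorem statement15 (u v : ℤ) (hv : 0 < v) (hvu : v < u) (hcop : IsCoprime u v)
    (ℓ p : ℕ) (hℓ : ℓ.Prime) (hp : p.Prime) (hlp : ℓ < p) (t : ℤ)
    (hΦ : ∑ i ∈ Finset.range ℓ, u ^ i * v ^ (ℓ - 1 - i) = (p : ℤ) * t) :
    RatModEqP p ((ℓ : ℚ) * fermatQuot p ((u : ℚ) / (v : ℚ)))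
      (-(((u : ℚ) - (v : ℚ)) * (t : ℚ)) / (v : ℚ) ^ ℓ) :=
  statement15_general u v hcop ℓ p hℓ hp t hΦ
end

section
/- Let α be a rational number with |α| ≠ 1 and α ≠ 0. Then log_A(α) is not equal to any nonzero rational number in A. Equivalently, for every pair of integers a ≠ 0 and b > 0, there exist infinitely many primes p with b·q_p(α) ≢ a (mod p), where q_p(α) = (α^{p−1} − 1)/p is the Fermat quotient. -/
/-!
Write `α = ±x/y` in lowest terms. If `b·q_p(α) ≡ a (mod p)` for all large `p`, then (as `p - 1`
is even, and after possibly swapping `x` and `y`) `p² ∣ b (u^(p-1) - v^(p-1)) - c p v^(p-1)` for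
all large `p`, with `u > v ≥ 1` coprime and `c = ±a ≠ 0`.

Take a large prime `ℓ` and `Φ = (u^ℓ - v^ℓ)/(u - v)`. Modulo a prime factor `p` of `Φ`, `u/v` has
order `ℓ`, so `p ≡ 1 (mod ℓ)`; writing `p - 1 = ℓ m`, the congruence at `p` becomes
`p ∣ b (u - v) (Φ/p) + c ℓ v^ℓ`. Hence `Φ` is squarefree and divides
`X = b (u - v) ∑_{p ∣ Φ} Φ/p + c ℓ v^ℓ`. Since `Φ ≤ u^ℓ` has at most `ℓ log u / log ℓ` prime
factors, all larger than `ℓ`, we get `|X| < Φ` and so `X = 0`. But modulo `ℓ` every `Φ/p` is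
`≡ 1`, so `X ≡ b (u - v) ω(Φ)` with `0 < ω(Φ) < ℓ`, which is not `0`.
-/

open Finset Filter

lemma sq_dvd_of_ratModEqP_div_zero {p : ℕ} (hp : p.Prime) {n d : ℤ} (hd : d ≠ 0)
    (hpd : padicValInt p d = 1) (h : RatModEqP p (n / d) 0) : (p : ℤ) ^ 2 ∣ n := by
  have := Fact.mk hp
  rcases h with h | h
  · rw [div_eq_zero_iff, Int.cast_eq_zero, Int.cast_eq_zero] at h
    simp [h.resolve_right hd]
  rcases eq_or_ne n 0 with rfl | hn
  · exact dvd_zero _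
  rw [sub_zero, padicValRat.div (by exact_mod_cast hn) (by exact_mod_cast hd),
    padicValRat.of_int, padicValRat.of_int, hpd] at h
  exact (padicValInt_dvd_iff 2 n).mpr (Or.inr (by omega))

lemma RatModEqP.sub_zero {p : ℕ} {x y : ℚ} (h : RatModEqP p x y) : RatModEqP p (x - y) 0 := by
  simpa [RatModEqP, sub_eq_zero] using h

lemma sq_dvd_of_ratModEqP_fermatQuot {p : ℕ} (hp : p.Prime) {α : ℚ} (hpα : ¬ p ∣ α.den)
    {a b : ℤ} (h : RatModEqP p (b * fermatQuot p α) a) :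
    (p : ℤ) ^ 2 ∣
      b * (α.num ^ (p - 1) - (α.den : ℤ) ^ (p - 1)) - a * p * (α.den : ℤ) ^ (p - 1) := by
  have hp0 : (p : ℤ) ≠ 0 := by exact_mod_cast hp.ne_zero
  have hden : (α.den : ℤ) ≠ 0 := by exact_mod_cast α.den_ne_zero
  have hpd : padicValInt p (p * (α.den : ℤ) ^ (p - 1)) = 1 := by
    have := Fact.mk hp
    rw [padicValInt.mul hp0 (pow_ne_zero _ hden), padicValInt.self hp.one_lt,
      padicValInt.eq_zero_of_not_dvd]
    exact fun h' => hpα <| Int.natCast_dvd_natCast.mp <|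
      (Nat.prime_iff_prime_int.mp hp).dvd_of_dvd_pow h'
  refine sq_dvd_of_ratModEqP_div_zero hp (mul_ne_zero hp0 (pow_ne_zero _ hden)) hpd ?_
  convert h.sub_zero using 2
  have : (α.den : ℚ) ≠ 0 := by exact_mod_cast hden
  have : (p : ℚ) ≠ 0 := by exact_mod_cast hp0
  rw [fermatQuot, ← Rat.num_div_den α, div_pow, Rat.num_div_den]
  push_cast
  field_simp

lemma sq_dvd_swap {p : ℕ} (hp : p.Prime) {b c X Y : ℤ} (hb : ¬ (p : ℤ) ∣ b)
    (h : (p : ℤ) ^ 2 ∣ b * (X - Y) - c * p * Y) : (p : ℤ) ^ 2 ∣ b * (Y - X) - (-c) * p * X := by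
  have hXY : (p : ℤ) ∣ X - Y := by
    refine ((Nat.prime_iff_prime_int.mp hp).dvd_mul.mp ?_).resolve_left hb
    have := (dvd_pow_self (p : ℤ) two_ne_zero).trans h
    rwa [← dvd_add_left (dvd_mul_of_dvd_left (dvd_mul_left (p : ℤ) c) Y), sub_add_cancel] at this
  rw [show b * (Y - X) - (-c) * p * X = c * p * (X - Y) - (b * (X - Y) - c * p * Y) by ring]
  exact dvd_sub (by rw [pow_two]; exact mul_dvd_mul (dvd_mul_left _ _) hXY) h

lemma intCast_zmod_ne_zero_of_natAbs_lt {ℓ : ℕ} {x : ℤ} (hx : x ≠ 0) (hxℓ : x.natAbs < ℓ) :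
    (x : ZMod ℓ) ≠ 0 := by
  rw [Ne, ZMod.intCast_zmod_eq_zero_iff_dvd, Int.natCast_dvd]
  exact fun h => absurd (Nat.le_of_dvd (Int.natAbs_pos.mpr hx) h) (by omega)

/-- The paper's `Φ_n(u, v) = (u^n - v^n)/(u - v)`. -/
def geomSum₂ (u v n : ℕ) : ℕ := ∑ i ∈ range n, u ^ i * v ^ (n - 1 - i)

lemma geomSum₂_mul_sub (u v n : ℕ) : (geomSum₂ u v n : ℤ) * (u - v) = (u : ℤ) ^ n - v ^ n := by
  simpa [geomSum₂] using geom_sum₂_mul (u : ℤ) v n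

lemma geomSum₂_le_pow {u v : ℕ} (h : v < u) (n : ℕ) : geomSum₂ u v n ≤ u ^ n :=
  calc geomSum₂ u v n ≤ geomSum₂ u v n * (u - v) := Nat.le_mul_of_pos_right _ (by omega)
    _ = u ^ n - v ^ n := geom_sum₂_mul_of_ge h.le n
    _ ≤ u ^ n := Nat.sub_le _ _

lemma pow_pred_le_geomSum₂ (u v : ℕ) {n : ℕ} (hn : n ≠ 0) : u ^ (n - 1) ≤ geomSum₂ u v n := by
  have h := single_le_sum (f := fun i => u ^ i * v ^ (n - 1 - i)) (fun _ _ => Nat.zero_le _)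
    (mem_range.mpr (by omega : n - 1 < n))
  simpa [geomSum₂] using h

section PrimeDivisors

variable {u v n p : ℕ}

lemma natCast_geomSum₂ (R : Type*) [CommSemiring R] :
    ((geomSum₂ u v n : ℕ) : R) = ∑ i ∈ range n, (u : R) ^ i * (v : R) ^ (n - 1 - i) := by
  simp [geomSum₂]

lemma pow_eq_pow_of_dvd_geomSum₂ (hpΦ : p ∣ geomSum₂ u v n) :
    (u : ZMod p) ^ n = (v : ZMod p) ^ n := by
  have h := congrArg (Int.cast : ℤ → ZMod p) (geomSum₂_mul_sub u v n)
  push_cast [(ZMod.natCast_eq_zero_iff _ _).mpr hpΦ, zero_mul] at h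
  exact sub_eq_zero.mp h.symm

lemma natCast_ne_zero_of_dvd_geomSum₂ (hp : p.Prime) (hcop : u.Coprime v) (hn : n ≠ 0)
    (hpΦ : p ∣ geomSum₂ u v n) : (u : ZMod p) ≠ 0 ∧ (v : ZMod p) ≠ 0 := by
  have := Fact.mk hp
  have hiff : (u : ZMod p) = 0 ↔ (v : ZMod p) = 0 := by
    rw [← pow_eq_zero_iff hn, pow_eq_pow_of_dvd_geomSum₂ hpΦ, pow_eq_zero_iff hn]
  have hboth : ¬ ((u : ZMod p) = 0 ∧ (v : ZMod p) = 0) := by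
    rw [ZMod.natCast_eq_zero_iff, ZMod.natCast_eq_zero_iff]
    rintro ⟨hu, hv⟩
    exact hp.not_dvd_one (hcop ▸ Nat.dvd_gcd hu hv)
  tauto

lemma dvd_sub_one_of_dvd_geomSum₂ {ℓ : ℕ} (hℓ : ℓ.Prime) (hp : p.Prime) (hcop : u.Coprime v)
    (hvu : v < u) (huv : u - v < ℓ) (hpΦ : p ∣ geomSum₂ u v ℓ) : ℓ ∣ p - 1 := by
  have := Fact.mk hp
  obtain ⟨hu, hv⟩ := natCast_ne_zero_of_dvd_geomSum₂ hp hcop hℓ.ne_zero hpΦ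
  have hg : ((u : ZMod p) / v) ^ ℓ = 1 := by
    rw [div_pow, pow_eq_pow_of_dvd_geomSum₂ hpΦ, div_self (pow_ne_zero _ hv)]
  rcases hℓ.eq_one_or_self_of_dvd _ (orderOf_dvd_of_pow_eq_one hg) with h1 | hℓ_eq
  · exfalso
    have huv_eq : (u : ZMod p) = v := (div_eq_one_iff_eq hv).mp (orderOf_eq_one_iff.mp h1)
    -- modulo `p`, `Φ_ℓ(v, v) = ℓ v^(ℓ-1)`, so `p = ℓ`, while `p ∣ u - v` forces `p < ℓ`
    have hΦ : (ℓ : ZMod p) * (v : ZMod p) ^ (ℓ - 1) = 0 := by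
      have h := (ZMod.natCast_eq_zero_iff _ _).mpr hpΦ
      rwa [natCast_geomSum₂, huv_eq, geom_sum₂_self] at h
    have hpℓ : p = ℓ := (Nat.prime_dvd_prime_iff_eq hp hℓ).mp <|
      (ZMod.natCast_eq_zero_iff _ _).mp ((mul_eq_zero.mp hΦ).resolve_right (pow_ne_zero _ hv))
    have hpuv : p ∣ u - v :=
      (Nat.modEq_iff_dvd' hvu.le).mp ((ZMod.natCast_eq_natCast_iff _ _ _).mp huv_eq.symm)
    have := Nat.le_of_dvd (by omega) hpuv
    omega
  · exact hℓ_eq ▸ ZMod.orderOf_dvd_card_sub_one (div_ne_zero hu hv)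

end PrimeDivisors

lemma dvd_mul_sub_of_sq_dvd_pow_sub_pow {p m : ℕ} (hp : p.Prime) (hm : m ≠ 0) {b c w z D : ℤ}
    (hz : ¬ (p : ℤ) ∣ z) (hwz : w - z = p * D)
    (h : (p : ℤ) ^ 2 ∣ b * (w ^ m - z ^ m) - c * p * z ^ m) :
    (p : ℤ) ∣ b * D * m - c * z := by
  have := Fact.mk hp
  have hS : (p : ℤ) ∣ b * D * (∑ i ∈ range m, w ^ i * z ^ (m - 1 - i)) - c * z ^ m := by
    have heq : (p : ℤ) * (b * D * (∑ i ∈ range m, w ^ i * z ^ (m - 1 - i)) - c * z ^ m) =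
        b * (w ^ m - z ^ m) - c * p * z ^ m := by
      rw [← geom_sum₂_mul, hwz]; ring
    rwa [← mul_dvd_mul_iff_left (Nat.cast_ne_zero.mpr hp.ne_zero), heq, ← pow_two]
  have hwz' : (w : ZMod p) = z := by
    rw [← sub_eq_zero, ← Int.cast_sub, hwz]
    simp
  rw [← ZMod.intCast_zmod_eq_zero_iff_dvd] at hS hz ⊢
  push_cast at hS ⊢
  -- modulo `p` the geometric sum collapses to `m z^(m-1)`
  rw [hwz', geom_sum₂_self] at hS
  obtain ⟨k, rfl⟩ := Nat.exists_eq_add_one_of_ne_zero hm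
  have : (z : ZMod p) ^ k * (b * D * (k + 1 : ℕ) - c * z) = 0 := by
    rw [← hS, Nat.add_sub_cancel]; push_cast; ring
  exact (mul_eq_zero.mp this).resolve_left (pow_ne_zero _ hz)

lemma dvd_of_sq_dvd_of_dvd_geomSum₂ {u v ℓ p : ℕ} {b c : ℤ} (hp : p.Prime) (hℓp : ℓ ∣ p - 1)
    (hpv : ¬ p ∣ v) (hpΦ : p ∣ geomSum₂ u v ℓ)
    (h : (p : ℤ) ^ 2 ∣ b * ((u : ℤ) ^ (p - 1) - (v : ℤ) ^ (p - 1)) - c * p * (v : ℤ) ^ (p - 1)) :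
    (p : ℤ) ∣ b * (u - v) * (geomSum₂ u v ℓ / p : ℕ) + ℓ * (c * (v : ℤ) ^ ℓ) := by
  obtain ⟨m, hm⟩ := hℓp
  have hm0 : m ≠ 0 := by rintro rfl; have := hp.two_le; omega
  have hℓm : (ℓ : ℤ) * m = p - 1 := by
    have := hp.one_le; zify [this] at hm; exact hm.symm
  set Ψ : ℤ := ((geomSum₂ u v ℓ / p : ℕ) : ℤ)
  have hwz : (u : ℤ) ^ ℓ - (v : ℤ) ^ ℓ = p * ((u - v) * Ψ) := by
    have hΦ : (geomSum₂ u v ℓ : ℤ) = p * Ψ := by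
      rw [← Nat.cast_mul, Nat.mul_div_cancel' hpΦ]
    rw [← geomSum₂_mul_sub, hΦ]; ring
  have hz : ¬ (p : ℤ) ∣ (v : ℤ) ^ ℓ := fun h => hpv <| Int.natCast_dvd_natCast.mp <|
    (Nat.prime_iff_prime_int.mp hp).dvd_of_dvd_pow h
  rw [hm, pow_mul, pow_mul] at h
  have key := dvd_mul_sub_of_sq_dvd_pow_sub_pow hp hm0 hz hwz h
  -- multiplying by `ℓ` turns the factor `m` into `ℓ m = p - 1 ≡ -1`
  rw [show b * (u - v) * Ψ + ℓ * (c * (v : ℤ) ^ ℓ) =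
      b * ((u - v) * Ψ) * p - ℓ * (b * ((u - v) * Ψ) * m - c * (v : ℤ) ^ ℓ) by
    linear_combination (b * ((u - v) * Ψ)) * hℓm]
  exact dvd_sub (dvd_mul_left _ _) (dvd_mul_of_dvd_right key _)

def cofactorSum (n : ℕ) : ℕ := ∑ p ∈ n.primeFactors, n / p

section CofactorSum

variable {n : ℕ}

lemma squarefree_of_forall_dvd_mul_div_add (hn : n ≠ 0) {f e : ℤ}
    (h : ∀ p ∈ n.primeFactors, (p : ℤ) ∣ f * (n / p : ℕ) + e ∧ ¬ (p : ℤ) ∣ e) : Squarefree n := by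
  rw [Nat.squarefree_iff_prime_squarefree]
  intro p hp hpp
  obtain ⟨hdvd, he⟩ := h p (Nat.mem_primeFactors.mpr ⟨hp, (dvd_mul_right p p).trans hpp, hn⟩)
  have hpq : (p : ℤ) ∣ (n / p : ℕ) :=
    Int.natCast_dvd_natCast.mpr (Nat.dvd_div_of_mul_dvd hpp)
  exact he ((dvd_add_right (dvd_mul_of_dvd_right hpq f)).mp hdvd)

lemma dvd_mul_cofactorSum_add (hn : Squarefree n) {f e : ℤ}
    (h : ∀ p ∈ n.primeFactors, (p : ℤ) ∣ f * (n / p : ℕ) + e) :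
    (n : ℤ) ∣ f * cofactorSum n + e := by
  have hdvd : ∀ p ∈ n.primeFactors, (p : ℤ) ∣ f * cofactorSum n + e := by
    intro p hp
    have hrest : (p : ℤ) ∣ ((∑ q ∈ n.primeFactors.erase p, n / q : ℕ) : ℤ) := by
      refine Int.natCast_dvd_natCast.mpr (dvd_sum fun q hq => Nat.dvd_div_of_mul_dvd ?_)
      obtain ⟨hqp, hq⟩ := mem_erase.mp hq
      refine Nat.Coprime.mul_dvd_of_dvd_of_dvd ?_
        (Nat.dvd_of_mem_primeFactors hq) (Nat.dvd_of_mem_primeFactors hp)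
      exact (Nat.coprime_primes (Nat.prime_of_mem_primeFactors hq)
        (Nat.prime_of_mem_primeFactors hp)).mpr hqp
    rw [cofactorSum, ← add_sum_erase _ _ hp, Nat.cast_add, mul_add, add_right_comm]
    exact dvd_add (h p hp) (dvd_mul_of_dvd_right hrest f)
  have := prod_primes_dvd (f * cofactorSum n + e).natAbs
    (fun p hp => Nat.prime_iff.mp (Nat.prime_of_mem_primeFactors hp))
    (fun p hp => Int.natCast_dvd.mp (hdvd p hp))
  rwa [Nat.prod_primeFactors_of_squarefree hn, ← Int.natCast_dvd] at this

lemma natCast_eq_one_of_forall_primeFactors {R : Type*} [CommSemiring R] (hn : n ≠ 0)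
    (h : ∀ p ∈ n.primeFactors, (p : R) = 1) : (n : R) = 1 := by
  rw [← Nat.prod_factorization_pow_eq_self hn, Finsupp.prod, Nat.support_factorization,
    Nat.cast_prod]
  exact prod_eq_one fun p hp => by rw [Nat.cast_pow, h p hp, one_pow]

lemma natCast_cofactorSum {R : Type*} [CommSemiring R] (h : ∀ p ∈ n.primeFactors, (p : R) = 1) :
    (cofactorSum n : R) = #n.primeFactors := by
  rcases eq_or_ne n 0 with rfl | hn
  · simp [cofactorSum]
  rw [cofactorSum, Nat.cast_sum, card_eq_sum_ones, Nat.cast_sum, Nat.cast_one]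
  refine sum_congr rfl fun p hp => ?_
  have := congrArg (Nat.cast : ℕ → R) (Nat.div_mul_cancel (Nat.dvd_of_mem_primeFactors hp))
  rwa [Nat.cast_mul, h p hp, mul_one, natCast_eq_one_of_forall_primeFactors hn h] at this

lemma pow_card_primeFactors_le (hn : n ≠ 0) {a : ℕ} (h : ∀ p ∈ n.primeFactors, a ≤ p) :
    a ^ #n.primeFactors ≤ n :=
  (pow_card_le_prod _ _ _ h).trans <|
    Nat.le_of_dvd (Nat.pos_of_ne_zero hn) (Nat.prod_primeFactors_dvd n)

lemma cofactorSum_mul_le {a : ℕ} (h : ∀ p ∈ n.primeFactors, a ≤ p) :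
    cofactorSum n * a ≤ #n.primeFactors * n := by
  rw [cofactorSum, sum_mul]
  refine (sum_le_card_nsmul _ _ n fun p hp => ?_).trans_eq (smul_eq_mul _ _)
  exact (Nat.mul_le_mul_left _ (h p hp)).trans (Nat.div_mul_le_self n p)

lemma mul_cofactorSum_add_ne_zero {ℓ : ℕ} (hℓ : ℓ.Prime) {f e : ℤ} (hf : (f : ZMod ℓ) ≠ 0)
    (hn : 2 ≤ n) (h : ∀ p ∈ n.primeFactors, (p : ZMod ℓ) = 1) (hcard : #n.primeFactors < ℓ) :
    f * cofactorSum n + ℓ * e ≠ 0 := by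
  have := Fact.mk hℓ
  intro hX
  have hXℓ := congrArg (Int.cast : ℤ → ZMod ℓ) hX
  push_cast [ZMod.natCast_self, zero_mul, add_zero, natCast_cofactorSum h] at hXℓ
  have hdvd := (ZMod.natCast_eq_zero_iff _ _).mp ((mul_eq_zero.mp hXℓ).resolve_left hf)
  have := Nat.primeFactors_eq_empty.mp (card_eq_zero.mp (Nat.eq_zero_of_dvd_of_lt hdvd hcard))
  omega

lemma mul_card_primeFactors_le {ℓ u M : ℕ} (hn : n ≠ 0) (hu : 1 < u) (hnu : n ≤ u ^ ℓ)
    (hM : u ^ M ≤ ℓ) (h : ∀ p ∈ n.primeFactors, ℓ ≤ p) : M * #n.primeFactors ≤ ℓ := by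
  rw [← Nat.pow_le_pow_iff_right hu, pow_mul]
  exact (Nat.pow_le_pow_left hM _).trans ((pow_card_primeFactors_le hn h).trans hnu)

lemma mul_cofactorSum_lt {ℓ u M : ℕ} (hn : n ≠ 0) (hu : 1 < u) (hnu : n ≤ u ^ ℓ)
    (hM : u ^ M ≤ ℓ) (h : ∀ p ∈ n.primeFactors, ℓ < p) : M * cofactorSum n < n := by
  have hk := mul_card_primeFactors_le hn hu hnu hM fun p hp => (h p hp).le
  have hσ := cofactorSum_mul_le (a := ℓ + 1) h
  refine Nat.lt_of_mul_lt_mul_right (a := ℓ + 1) ?_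
  calc M * cofactorSum n * (ℓ + 1) ≤ M * #n.primeFactors * n := by
        rw [mul_assoc, mul_assoc]; exact Nat.mul_le_mul_left M hσ
    _ ≤ ℓ * n := Nat.mul_le_mul_right n hk
    _ < n * (ℓ + 1) := by rw [mul_comm]; exact Nat.mul_lt_mul_of_pos_left (by omega) (by omega)

end CofactorSum

lemma eventually_mul_mul_pow_le_pow_pred (C : ℕ) {u v : ℕ} (hvu : v < u) :
    ∀ᶠ n in atTop, C * n * v ^ n ≤ u ^ (n - 1) := by
  have hu : (0 : ℝ) < u := by exact_mod_cast (Nat.zero_le v).trans_lt hvu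
  have hr : |(v : ℝ) / u| < 1 := by
    rw [abs_of_nonneg (by positivity), div_lt_one hu]; exact_mod_cast hvu
  have hε : (0 : ℝ) < 1 / (C * u + 1) := by positivity
  filter_upwards [(tendsto_pow_const_mul_const_pow_of_abs_lt_one 1 hr).eventually (gt_mem_nhds hε),
    eventually_ge_atTop 1] with n hn hn1
  rw [pow_one, div_pow, lt_div_iff₀ (by positivity), mul_div_assoc', div_mul_eq_mul_div,
    div_lt_one (by positivity)] at hn
  have hlt : (C * n * v ^ n * u : ℝ) < u ^ n := by
    nlinarith [pow_nonneg (Nat.cast_nonneg (α := ℝ) v) n]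
  have hlt' : C * n * v ^ n * u < u ^ (n - 1) * u := by
    rw [← pow_succ, Nat.sub_add_cancel hn1]
    exact_mod_cast hlt
  exact (Nat.lt_of_mul_lt_mul_right hlt').le

section LargePrime

variable {u v ℓ : ℕ}

lemma forall_primeFactors_geomSum₂ (hcop : u.Coprime v) (hvu : v < u) (hℓ : ℓ.Prime)
    (huℓ : u < ℓ) : ∀ p ∈ (geomSum₂ u v ℓ).primeFactors, ℓ ∣ p - 1 ∧ ℓ < p ∧ ¬ p ∣ v := by
  intro p hp
  have hpp := Nat.prime_of_mem_primeFactors hp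
  have hpΦ := Nat.dvd_of_mem_primeFactors hp
  have hℓp := dvd_sub_one_of_dvd_geomSum₂ hℓ hpp hcop hvu (by omega) hpΦ
  refine ⟨hℓp, ?_, ?_⟩
  · have := Nat.le_of_dvd (by have := hpp.two_le; omega) hℓp
    omega
  · rw [← ZMod.natCast_eq_zero_iff]
    exact (natCast_ne_zero_of_dvd_geomSum₂ hpp hcop hℓ.ne_zero hpΦ).2

lemma squarefree_geomSum₂_and_dvd {b c : ℤ} (hcop : u.Coprime v) (hvu : v < u) (hc : c ≠ 0)
    (hℓ : ℓ.Prime) (huℓ : u < ℓ) (hcℓ : c.natAbs < ℓ)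
    (H : ∀ p, ℓ < p → p.Prime →
      (p : ℤ) ^ 2 ∣ b * ((u : ℤ) ^ (p - 1) - (v : ℤ) ^ (p - 1)) - c * p * (v : ℤ) ^ (p - 1)) :
    Squarefree (geomSum₂ u v ℓ) ∧
      (geomSum₂ u v ℓ : ℤ) ∣ b * (u - v) * cofactorSum (geomSum₂ u v ℓ) + ℓ * (c * v ^ ℓ) := by
  have hprimes := forall_primeFactors_geomSum₂ hcop hvu hℓ huℓ
  have hcong : ∀ p ∈ (geomSum₂ u v ℓ).primeFactors,
      (p : ℤ) ∣ b * (u - v) * (geomSum₂ u v ℓ / p : ℕ) + ℓ * (c * v ^ ℓ) := fun p hp =>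
    have hpp := Nat.prime_of_mem_primeFactors hp
    dvd_of_sq_dvd_of_dvd_geomSum₂ hpp (hprimes p hp).1 (hprimes p hp).2.2
      (Nat.dvd_of_mem_primeFactors hp) (H p (hprimes p hp).2.1 hpp)
  have hsf : Squarefree (geomSum₂ u v ℓ) := by
    refine squarefree_of_forall_dvd_mul_div_add ?_ fun p hp => ⟨hcong p hp, ?_⟩
    · have := pow_pred_le_geomSum₂ u v hℓ.ne_zero
      have := Nat.one_le_pow (ℓ - 1) u (by omega)
      omega
    obtain ⟨-, hlt, hpv⟩ := hprimes p hp
    have hpZ : Prime (p : ℤ) := Nat.prime_iff_prime_int.mp (Nat.prime_of_mem_primeFactors hp)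
    rw [hpZ.dvd_mul, hpZ.dvd_mul, Int.natCast_dvd_natCast, Int.natCast_dvd]
    rintro (h | h | h)
    · exact absurd (Nat.le_of_dvd hℓ.pos h) (by omega)
    · exact absurd (Nat.le_of_dvd (Int.natAbs_pos.mpr hc) h) (by omega)
    · exact hpv (Int.natCast_dvd_natCast.mp (hpZ.dvd_of_dvd_pow h))
  exact ⟨hsf, dvd_mul_cofactorSum_add hsf hcong⟩

lemma false_of_sq_dvd_of_large_prime {b c : ℤ} (hv : 0 < v) (hvu : v < u)
    (hcop : u.Coprime v) (hb : b ≠ 0) (hc : c ≠ 0) (hℓ : ℓ.Prime) (huℓ : u < ℓ)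
    (hbℓ : b.natAbs < ℓ) (hcℓ : c.natAbs < ℓ) (hsmall : u ^ (2 * b.natAbs * (u - v)) ≤ ℓ)
    (hgrowth : 2 * c.natAbs * ℓ * v ^ ℓ ≤ u ^ (ℓ - 1))
    (H : ∀ p, ℓ < p → p.Prime →
      (p : ℤ) ^ 2 ∣ b * ((u : ℤ) ^ (p - 1) - (v : ℤ) ^ (p - 1)) - c * p * (v : ℤ) ^ (p - 1)) :
    False := by
  have hΦ := pow_pred_le_geomSum₂ u v hℓ.ne_zero
  have hu : u ≤ u ^ (ℓ - 1) := le_self_pow (by omega) (by have := hℓ.two_le; omega)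
  have hprimes := forall_primeFactors_geomSum₂ hcop hvu hℓ huℓ
  obtain ⟨-, hdvd⟩ := squarefree_geomSum₂_and_dvd hcop hvu hc hℓ huℓ hcℓ H
  have hσ := mul_cofactorSum_lt (by omega) (by omega) (geomSum₂_le_pow hvu ℓ) hsmall
    fun p hp => (hprimes p hp).2.1
  have hk := mul_card_primeFactors_le (by omega) (by omega) (geomSum₂_le_pow hvu ℓ) hsmall
    fun p hp => (hprimes p hp).2.1.le
  generalize geomSum₂ u v ℓ = Φ at *
  have habs : |b * (u - v) * cofactorSum Φ + ℓ * (c * v ^ ℓ)| < Φ := by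
    zify [hvu.le] at hσ hgrowth hΦ
    calc _ ≤ |b * (u - v) * cofactorSum Φ| + |ℓ * (c * v ^ ℓ)| := abs_add_le _ _
      _ = |b| * (u - v) * cofactorSum Φ + ℓ * (|c| * v ^ ℓ) := by
        simp only [abs_mul, abs_pow, Nat.abs_cast,
          abs_of_nonneg (sub_nonneg.mpr (Nat.cast_le.mpr hvu.le))]
      _ < Φ := by linarith
  have hmod : ∀ p ∈ Φ.primeFactors, (p : ZMod ℓ) = 1 := fun p hp => by
    rw [← Nat.cast_one, ZMod.natCast_eq_natCast_iff]
    exact ((Nat.modEq_iff_dvd' (Nat.prime_of_mem_primeFactors hp).one_le).mpr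
      (hprimes p hp).1).symm
  have hcard : #Φ.primeFactors < ℓ := by
    have hM : 2 ≤ 2 * b.natAbs * (u - v) :=
      Nat.le_mul_of_pos_right _ (by omega) |>.trans' (by omega)
    have := Nat.mul_le_mul_right #Φ.primeFactors hM
    have := hℓ.pos
    omega
  have hbuv : ((b * (u - v) : ℤ) : ZMod ℓ) ≠ 0 := by
    have := Fact.mk hℓ
    rw [Int.cast_mul]
    exact mul_ne_zero (intCast_zmod_ne_zero_of_natAbs_lt hb hbℓ)
      (intCast_zmod_ne_zero_of_natAbs_lt (by omega) (by omega))
  exact mul_cofactorSum_add_ne_zero hℓ hbuv (by omega) hmod hcard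
    (Int.eq_zero_of_abs_lt_dvd hdvd habs)

lemma false_of_eventually_sq_dvd {b c : ℤ} (hv : 0 < v) (hvu : v < u)
    (hcop : u.Coprime v) (hb : b ≠ 0) (hc : c ≠ 0)
    (H : ∀ᶠ p : ℕ in atTop, p.Prime →
      (p : ℤ) ^ 2 ∣ b * ((u : ℤ) ^ (p - 1) - (v : ℤ) ^ (p - 1)) - c * p * (v : ℤ) ^ (p - 1)) :
    False := by
  obtain ⟨N, hN⟩ := eventually_atTop.mp H
  obtain ⟨ℓ, hℓ, hNℓ, huℓ, hbℓ, hcℓ, hsmall, hgrowth⟩ :=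
    ((Nat.frequently_atTop_iff_infinite.mpr Nat.infinite_setOfPred_prime).and_eventually
      ((eventually_ge_atTop N).and <| (eventually_gt_atTop u).and <|
        (eventually_gt_atTop b.natAbs).and <| (eventually_gt_atTop c.natAbs).and <|
        (eventually_ge_atTop _).and (eventually_mul_mul_pow_le_pow_pred (2 * c.natAbs) hvu))).exists
  exact false_of_sq_dvd_of_large_prime hv hvu hcop hb hc hℓ huℓ hbℓ hcℓ hsmall hgrowth
    fun p hℓp hp => hN p (by omega) hp

end LargePrime

/-- For a nonzero rational `α` with `|α| ≠ 1`, `log_A(α)` is not equal to any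
nonzero rational: for all integers `a ≠ 0`, `b > 0`, infinitely many primes `p`
satisfy `b·q_p(α) ≢ a (mod p)`. -/
theorem statement16 (α : ℚ) (hα0 : α ≠ 0) (hα1 : |α| ≠ 1) (a b : ℤ)
    (ha : a ≠ 0) (hb : 0 < b) :
    {p : ℕ | p.Prime ∧ ¬ RatModEqP p ((b : ℚ) * fermatQuot p α) (a : ℚ)}.Infinite := by
  intro hfin
  have hcong : ∀ᶠ p : ℕ in atTop, p.Prime → (p : ℤ) ^ 2 ∣ b * ((α.num.natAbs : ℤ) ^ (p - 1) -
      (α.den : ℤ) ^ (p - 1)) - a * p * (α.den : ℤ) ^ (p - 1) := by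
    filter_upwards [Nat.cofinite_eq_atTop ▸ hfin.eventually_cofinite_notMem,
      eventually_gt_atTop α.den, eventually_gt_atTop 2] with p hpS hpden hp2 hp
    have hodd := hp.eq_two_or_odd'.resolve_left (by omega)
    rw [Int.natCast_natAbs, (Nat.Odd.sub_odd hodd odd_one).pow_abs]
    exact sq_dvd_of_ratModEqP_fermatQuot hp (fun h => absurd (Nat.le_of_dvd α.den_pos h) (by omega))
      (not_not.mp fun h => hpS ⟨hp, h⟩)
  have hnd : α.num.natAbs ≠ α.den := fun h => hα1 <| by
    rw [← Rat.num_div_den α, abs_div, Nat.abs_cast, ← Int.cast_abs, ← Int.natCast_natAbs, h,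
      Int.cast_natCast, div_self (by exact_mod_cast α.den_ne_zero)]
  rcases hnd.lt_or_gt with h | h
  · refine false_of_eventually_sq_dvd (Int.natAbs_pos.mpr (Rat.num_ne_zero.mpr hα0)) h
      α.reduced.symm hb.ne' (neg_ne_zero.mpr ha) ?_
    filter_upwards [hcong, eventually_gt_atTop b.natAbs] with p hp hpb hpp
    refine sq_dvd_swap hpp (fun h => ?_) (hp hpp)
    exact absurd (Nat.le_of_dvd (Int.natAbs_pos.mpr hb.ne') (Int.natCast_dvd.mp h)) (by omega)
  · exact false_of_eventually_sq_dvd α.den_pos h α.reduced hb.ne' ha hcong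
end

section
/- Assume that for every prime p ≡ 3 (mod 4) with p > 3, the Bernoulli number B_{(p+1)/2} satisfies −2·B_{(p+1)/2} ≡ h(−p) (mod p) in ℤ_(p), where h(−p) is the class number of ℚ(√−p), and that 0 < h(−p) < p. Assume also that for every prime p ≡ 1 (mod 4), B_{(p+1)/2} = 0 and (1/2)E_{(p−1)/2} ≡ h(−4p) (mod p) with 0 < h(−4p) < p, where E_n is the n-th Euler number. Then the elements B := (B_{(p+1)/2} mod p)_p and E := (E_{(p−1)/2} mod p)_p of A are linearly independent over ℚ. -/
/-- The Euler numbers `E_n`, defined by `sech t = Σ E_n t^n / n!`. -/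
noncomputable def eulerNumber (n : ℕ) : ℚ :=
  (n.factorial : ℚ) * PowerSeries.coeff (R := ℚ) n
    (PowerSeries.mk fun k => if Even k then (1 : ℚ) / k.factorial else 0)⁻¹

/-!
For a prime `p ≡ 1 (mod 4)` the term `b·B_{(p+1)/2}` vanishes, while `(1/2)·E_{(p-1)/2}` is
congruent to an integer in `(0, p)`, hence is a `p`-adic unit; so `e·E_{(p-1)/2} ≡ 0 (mod p)`
forces `p ∣ e`. Infinitely many such primes give `e = 0`. With `e = 0`, the same argument with
`-2·B_{(p+1)/2} ≡ h(-p)` at the infinitely many primes `p ≡ 3 (mod 4)` gives `b = 0`.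
-/

theorem RatModEqP.padicNorm_sub_lt_one {p : ℕ} [Fact p.Prime] {x y : ℚ}
    (hxy : RatModEqP p x y) : padicNorm p (x - y) < 1 := by
  rcases hxy with rfl | hv
  · simp
  · by_cases h0 : x - y = 0
    · simp [h0]
    · rw [padicNorm, if_neg h0]
      exact zpow_lt_one_of_neg₀ (by exact_mod_cast (Fact.out : p.Prime).one_lt) (neg_neg_of_pos hv)

theorem padicNorm_eq_one_of_ratModEqP {p : ℕ} [Fact p.Prime] {x y : ℚ}
    (hxy : RatModEqP p x y) (hy : padicNorm p y = 1) : padicNorm p x = 1 := by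
  have hne : padicNorm p (x - y) ≠ padicNorm p y := by
    rw [hy]; exact hxy.padicNorm_sub_lt_one.ne
  have := padicNorm.add_eq_max_of_ne hne
  rwa [sub_add_cancel, hy, max_eq_right hxy.padicNorm_sub_lt_one.le] at this

theorem padicNorm_two_eq_one {p : ℕ} [hp : Fact p.Prime] (hp2 : p ≠ 2) : padicNorm p 2 = 1 := by
  have := (padicNorm.nat_eq_one_iff (p := p) 2).mpr fun hdvd =>
    hp2 ((Nat.prime_dvd_prime_iff_eq hp.out Nat.prime_two).mp hdvd)
  exact_mod_cast this

theorem dvd_of_ratModEqP_mul {p : ℕ} [Fact p.Prime] {c X : ℚ} {n : ℕ} {k : ℤ}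
    (hc : padicNorm p c = 1) (hn : 0 < n) (hnp : n < p)
    (hcX : RatModEqP p (c * X) n) (hkX : RatModEqP p (k * X) 0) : (p : ℤ) ∣ k := by
  have hn_unit : padicNorm p n = 1 :=
    (padicNorm.nat_eq_one_iff n).mpr (Nat.not_dvd_of_pos_of_lt hn hnp)
  have hX : padicNorm p X = 1 := by
    simpa [padicNorm.mul, hc] using padicNorm_eq_one_of_ratModEqP hcX hn_unit
  rw [← padicNorm.int_lt_one_iff]
  simpa [padicNorm.mul, hX] using hkX.padicNorm_sub_lt_one

theorem Int.eq_zero_of_infinite_setOf_prime_dvd {k : ℤ}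
    (hk : {p : ℕ | p.Prime ∧ (p : ℤ) ∣ k}.Infinite) : k = 0 := by
  by_contra hk0
  refine hk ((Nat.divisors k.natAbs).finite_toSet.subset ?_)
  rintro p ⟨-, hpk⟩
  exact Nat.mem_divisors.mpr ⟨Int.natCast_dvd.mp hpk, by simpa using hk0⟩

theorem Nat.infinite_setOf_prime_and_mod_eq {q a : ℕ} (hcop : a.Coprime q) (haq : a < q) :
    {p : ℕ | p.Prime ∧ p % q = a}.Infinite := by
  have : NeZero q := ⟨by omega⟩
  refine (Nat.infinite_setOfPred_prime_and_eq_mod ((ZMod.isUnit_iff_coprime a q).mpr hcop)).mono ?_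
  rintro p ⟨hp, hpa⟩
  exact ⟨hp, by rw [(ZMod.natCast_eq_natCast_iff' p a q).mp hpa, Nat.mod_eq_of_lt haq]⟩

/-- Assuming the classical congruences relating `B_{(p+1)/2}` and `E_{(p-1)/2}`
to class numbers `h(-p)` and `h(-4p)`, the elements `B = (B_{(p+1)/2} mod p)_p`
and `E = (E_{(p-1)/2} mod p)_p` of `A` are linearly independent over `ℚ`. -/
theorem statement17 (h : ℕ → ℕ)
    (hyp3 : ∀ p : ℕ, p.Prime → 3 < p → p % 4 = 3 →
      RatModEqP p (-2 * bernoulli' ((p + 1) / 2)) (h p) ∧ 0 < h p ∧ h p < p)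
    (hyp1 : ∀ p : ℕ, p.Prime → p % 4 = 1 →
      bernoulli' ((p + 1) / 2) = 0 ∧
      RatModEqP p ((1 / 2 : ℚ) * eulerNumber ((p - 1) / 2)) (h (4 * p)) ∧
      0 < h (4 * p) ∧ h (4 * p) < p)
    (b e : ℤ)
    (hlin : {p : ℕ | p.Prime ∧ ¬ RatModEqP p
      ((b : ℚ) * bernoulli' ((p + 1) / 2) + (e : ℚ) * eulerNumber ((p - 1) / 2))
      0}.Finite) :
    b = 0 ∧ e = 0 := by
  have he : e = 0 := by
    refine Int.eq_zero_of_infinite_setOf_prime_dvd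
      (((Nat.infinite_setOf_prime_and_mod_eq (q := 4) (a := 1) (by decide) (by decide)).sdiff
        hlin).mono ?_)
    rintro p ⟨⟨hp, hp4⟩, hpl⟩
    have : Fact p.Prime := ⟨hp⟩
    obtain ⟨hB, hE, hpos, hlt⟩ := hyp1 p hp hp4
    have hhalf : padicNorm p (1 / 2) = 1 := by
      rw [padicNorm.div, padicNorm.one, padicNorm_two_eq_one (by omega), div_one]
    refine ⟨hp, dvd_of_ratModEqP_mul hhalf hpos hlt hE ?_⟩
    simpa [hB] using not_not.mp (not_and.mp hpl hp)
  subst he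
  refine ⟨Int.eq_zero_of_infinite_setOf_prime_dvd
    ((((Nat.infinite_setOf_prime_and_mod_eq (q := 4) (a := 3) (by decide) (by decide)).sdiff
      hlin).sdiff (Set.finite_le_nat 3)).mono ?_), rfl⟩
  rintro p ⟨⟨⟨hp, hp4⟩, hpl⟩, hp3⟩
  have : Fact p.Prime := ⟨hp⟩
  obtain ⟨hB, hpos, hlt⟩ := hyp3 p hp (by simpa using hp3) hp4
  have hneg_two : padicNorm p (-2) = 1 := by
    rw [padicNorm.neg, padicNorm_two_eq_one (by omega)]
  refine ⟨hp, dvd_of_ratModEqP_mul hneg_two hpos hlt hB ?_⟩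
  simpa using not_not.mp (not_and.mp hpl hp)
end
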